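/- arXiv:2105.07534 — 2 statements merged into one kernel-verified Lean document; each statement's English description precedes it below -/
import Mathlib

section
/- Let μ be a nonzero finite positive Borel measure on ℝ with compact support. Then liminf_{t→∞} ln W_μ(t)/ln t = −D⁺_μ(2) and limsup_{t→∞} ln W_μ(t)/ln t = −D⁻_μ(2). -/
open MeasureTheory Filter Set Metric
open scoped ENNReal Topology Classical

noncomputable section

/-- `μ` is uniformly `α`-Hölder continuous: there is `C > 0` with
`μ(I) < C |I|^α` for every (nondegenerate) interval `I` with `|I| < 1`. -/
def UnifHolder (μ : Measure ℝ) (α : ℝ) : Prop :=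
  ∃ C > (0 : ℝ), ∀ a b : ℝ, a < b → b - a < 1 →
    μ (Set.Icc a b) < ENNReal.ofReal (C * (b - a) ^ α)

/-- The Fourier transform `μ̂(s) = ∫ e^{-isx} dμ(x)` of a finite Borel measure on `ℝ`. -/
def measureFT (μ : Measure ℝ) (s : ℝ) : ℂ :=
  ∫ x : ℝ, Complex.exp (-(s * x) * Complex.I) ∂μ

/-- The time-average quantum return probability
`W_μ(t) = (1/t) ∫_0^t |μ̂(s)|² ds`. -/
def Wavg (μ : Measure ℝ) (t : ℝ) : ℝ :=
  (1 / t) * ∫ s in Set.Ioc (0 : ℝ) t, ‖measureFT μ s‖ ^ 2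

/-- `μ` is the spectral measure of the pair `(T, ψ)`: it is finite, vanishes outside
the spectrum of `T`, and `∫ f dμ = ⟨ψ, f(T)ψ⟩` for every continuous `f : ℝ → ℝ`,
where `f(T)` is given by the continuous functional calculus. -/
def IsSpectralMeasure {H : Type*} [NormedAddCommGroup H] [InnerProductSpace ℂ H]
    [CompleteSpace H] (T : H →L[ℂ] H) (ψ : H) (μ : Measure ℝ) : Prop :=
  IsFiniteMeasure μ ∧ μ {x : ℝ | (x : ℂ) ∉ spectrum ℂ T} = 0 ∧
    ∀ f : C(ℝ, ℝ), ∫ x, f x ∂μ = (inner ℂ ψ ((cfc (f : ℝ → ℝ) T) ψ) : ℂ).re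

/-- The real part of the spectrum of a bounded operator. -/
def realSpectrum {H : Type*} [NormedAddCommGroup H] [InnerProductSpace ℂ H]
    [CompleteSpace H] (T : H →L[ℂ] H) : Set ℝ :=
  {x : ℝ | (x : ℂ) ∈ spectrum ℂ T}

/-- `μ` is `α`-Hausdorff continuous: `μ(Λ) = 0` for every Borel set `Λ` with
`h^α(Λ) = 0`. -/
def HausdorffCont (μ : Measure ℝ) (α : ℝ) : Prop :=
  ∀ Λ : Set ℝ, MeasurableSet Λ → μH[α] Λ = 0 → μ Λ = 0

/-- The lower pointwise scaling exponent `d⁻_μ(x)`, with value `∞` when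
`μ(B(x;ε)) = 0` for some `ε > 0`. -/
def dLow (μ : Measure ℝ) (x : ℝ) : EReal :=
  if ∃ ε > (0 : ℝ), μ (Metric.ball x ε) = 0 then ⊤
  else Filter.liminf
    (fun ε : ℝ => ((Real.log (μ (Metric.ball x ε)).toReal / Real.log ε : ℝ) : EReal))
    (𝓝[>] (0 : ℝ))

/-- The upper pointwise scaling exponent `d⁺_μ(x)`, with value `∞` when
`μ(B(x;ε)) = 0` for some `ε > 0`. -/
def dUp (μ : Measure ℝ) (x : ℝ) : EReal :=
  if ∃ ε > (0 : ℝ), μ (Metric.ball x ε) = 0 then ⊤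
  else Filter.limsup
    (fun ε : ℝ => ((Real.log (μ (Metric.ball x ε)).toReal / Real.log ε : ℝ) : EReal))
    (𝓝[>] (0 : ℝ))

/-- The lower correlation dimension `D⁻_μ(2)`. -/
def DLow2 (μ : Measure ℝ) : EReal :=
  Filter.liminf
    (fun ε : ℝ =>
      ((Real.log (∫ x, (μ (Metric.ball x ε)).toReal ∂μ) / Real.log ε : ℝ) : EReal))
    (𝓝[>] (0 : ℝ))

/-- The upper correlation dimension `D⁺_μ(2)`. -/
def DUp2 (μ : Measure ℝ) : EReal :=
  Filter.limsup
    (fun ε : ℝ =>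
      ((Real.log (∫ x, (μ (Metric.ball x ε)).toReal ∂μ) / Real.log ε : ℝ) : EReal))
    (𝓝[>] (0 : ℝ))

/-- A set is generic (residual / comeagre in the Baire sense used in the paper)
if it contains a dense `G_δ` set. -/
def Generic {X : Type*} [TopologicalSpace X] (A : Set X) : Prop :=
  ∃ S : Set X, S ⊆ A ∧ IsGδ S ∧ Dense S

def corrE (μ : Measure ℝ) (r : ℝ) : ℝ≥0∞ := (μ.prod μ) {p : ℝ × ℝ | |p.1 - p.2| < r}

def corrR (μ : Measure ℝ) (r : ℝ) : ℝ := (corrE μ r).toReal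

lemma measurableSet_corrSet (r : ℝ) : MeasurableSet {p : ℝ × ℝ | |p.1 - p.2| < r} :=
  (isOpen_lt ((continuous_fst.sub continuous_snd).abs) continuous_const).measurableSet

lemma corrE_lt_top (μ : Measure ℝ) [IsFiniteMeasure μ] (r : ℝ) : corrE μ r < ∞ :=
  measure_lt_top _ _

lemma corrE_mono (μ : Measure ℝ) {r₁ r₂ : ℝ} (h : r₁ ≤ r₂) : corrE μ r₁ ≤ corrE μ r₂ :=
  measure_mono fun p hp => lt_of_lt_of_le hp h

lemma corrR_nonneg (μ : Measure ℝ) (r : ℝ) : 0 ≤ corrR μ r := ENNReal.toReal_nonneg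

lemma corrR_mono (μ : Measure ℝ) [IsFiniteMeasure μ] {r₁ r₂ : ℝ} (h : r₁ ≤ r₂) :
    corrR μ r₁ ≤ corrR μ r₂ :=
  ENNReal.toReal_mono (corrE_lt_top μ r₂).ne (corrE_mono μ h)

lemma corrR_le (μ : Measure ℝ) [IsFiniteMeasure μ] (r : ℝ) :
    corrR μ r ≤ (μ univ).toReal ^ 2 := by
  have : corrE μ r ≤ (μ univ) * (μ univ) := by
    rw [← Measure.prod_prod, univ_prod_univ]; exact measure_mono (subset_univ _)
  have h2 := ENNReal.toReal_mono (by finiteness) this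
  rwa [ENNReal.toReal_mul, ← sq] at h2

lemma integral_ball_eq_corrR (μ : Measure ℝ) [IsFiniteMeasure μ] (ε : ℝ) :
    ∫ x, (μ (ball x ε)).toReal ∂μ = corrR μ ε := by
  have hs := measurableSet_corrSet ε
  have hps : ∀ x : ℝ, Prod.mk x ⁻¹' {p : ℝ × ℝ | |p.1 - p.2| < ε} = ball x ε := by
    intro x; ext y; simp [Metric.mem_ball, Real.dist_eq, abs_sub_comm]
  have hm : Measurable fun x : ℝ => μ (ball x ε) := by
    have := measurable_measure_prodMk_left (ν := μ) hs
    simpa only [hps] using this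
  rw [corrR, corrE, Measure.prod_apply hs]
  simp only [hps]
  exact integral_toReal hm.aemeasurable (Eventually.of_forall fun x => measure_lt_top μ _)

section Intervals

variable (μ : Measure ℝ) [IsFiniteMeasure μ] {r : ℝ}

/-- interval pieces -/
def iseg (r : ℝ) (j : ℤ) : Set ℝ := Ico ((j : ℝ) * r) (((j : ℝ) + 1) * r)

lemma mem_iseg_self (hr : 0 < r) (x : ℝ) : x ∈ iseg r ⌊x / r⌋ := by
  constructor
  · calc ((⌊x / r⌋ : ℝ)) * r ≤ (x / r) * r := by
          exact mul_le_mul_of_nonneg_right (Int.floor_le _) hr.le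
    _ = x := by field_simp
  · calc x = (x / r) * r := by field_simp
    _ < ((⌊x / r⌋ : ℝ) + 1) * r := by
          exact mul_lt_mul_of_pos_right (Int.lt_floor_add_one _) hr

lemma iseg_disjoint (hr : 0 < r) : Pairwise (Function.onFun Disjoint (iseg r)) := by
  intro j k hjk
  rcases hjk.lt_or_gt with h | h
  · apply Set.disjoint_left.2
    rintro x ⟨_, hx2⟩ ⟨hx3, _⟩
    have : ((j : ℝ) + 1) * r ≤ (k : ℝ) * r := by
      have : ((j : ℝ) + 1) ≤ (k : ℝ) := by exact_mod_cast Int.add_one_le_iff.2 h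
      exact mul_le_mul_of_nonneg_right this hr.le
    linarith
  · apply Set.disjoint_left.2
    rintro x ⟨hx1, _⟩ ⟨_, hx4⟩
    have : ((k : ℝ) + 1) * r ≤ (j : ℝ) * r := by
      have : ((k : ℝ) + 1) ≤ (j : ℝ) := by exact_mod_cast Int.add_one_le_iff.2 h
      exact mul_le_mul_of_nonneg_right this hr.le
    linarith

lemma tsum_sq_le_corrE (hr : 0 < r) :
    ∑' j : ℤ, μ (iseg r j) ^ 2 ≤ corrE μ r := by
  have hdisj : Pairwise (Function.onFun Disjoint fun j : ℤ => iseg r j ×ˢ iseg r j) := by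
    intro j k hjk
    exact Set.disjoint_left.2 fun p hp hq =>
      Set.disjoint_left.1 (iseg_disjoint hr hjk) hp.1 hq.1
  have hmeas : ∀ j : ℤ, MeasurableSet (iseg r j ×ˢ iseg r j) :=
    fun j => measurableSet_Ico.prod measurableSet_Ico
  calc ∑' j : ℤ, μ (iseg r j) ^ 2
      = (μ.prod μ) (⋃ j : ℤ, iseg r j ×ˢ iseg r j) := by
        rw [measure_iUnion hdisj hmeas]
        congr 1; funext j; rw [Measure.prod_prod, sq]
    _ ≤ corrE μ r := by
        apply measure_mono
        rintro ⟨x, y⟩ hp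
        simp only [mem_iUnion] at hp
        obtain ⟨j, ⟨hx1, hx2⟩, hy1, hy2⟩ := hp
        simp only [iseg, mem_Ico] at *
        show |x - y| < r
        rw [abs_lt]; constructor <;> nlinarith

lemma corrE_pos (hμ : μ ≠ 0) (hr : 0 < r) : 0 < corrE μ r := by
  have huniv : (univ : Set ℝ) = ⋃ j : ℤ, iseg r j := by
    ext x; simp only [mem_univ, true_iff, mem_iUnion]
    exact ⟨⌊x / r⌋, mem_iseg_self hr x⟩
  have hsum : μ univ = ∑' j : ℤ, μ (iseg r j) := by
    rw [huniv, measure_iUnion (iseg_disjoint hr) fun j => measurableSet_Ico]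
  have hne : μ univ ≠ 0 := by simpa [Measure.measure_univ_eq_zero] using hμ
  rw [hsum] at hne
  obtain ⟨j, hj⟩ : ∃ j : ℤ, μ (iseg r j) ≠ 0 := by
    by_contra h; push_neg at h; exact hne (by simp [h])
  calc (0 : ℝ≥0∞) < μ (iseg r j) ^ 2 := by positivity
    _ ≤ ∑' j : ℤ, μ (iseg r j) ^ 2 := ENNReal.le_tsum j
    _ ≤ corrE μ r := tsum_sq_le_corrE μ hr

lemma corrR_pos (hμ : μ ≠ 0) (hr : 0 < r) : 0 < corrR μ r :=
  ENNReal.toReal_pos (corrE_pos μ hμ hr).ne' (corrE_lt_top μ r).ne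

/-- doubling-type inequality -/
lemma corrE_nat_mul_le (hr : 0 < r) (N : ℕ) :
    corrE μ ((N : ℝ) * r) ≤ (2 * N + 1 : ℕ) * (2 * ∑' j : ℤ, μ (iseg r j) ^ 2) := by
  set a : ℤ → ℝ≥0∞ := fun j => μ (iseg r j) with ha
  have hcover : {p : ℝ × ℝ | |p.1 - p.2| < (N : ℝ) * r} ⊆
      ⋃ j : ℤ, ⋃ m ∈ Finset.Icc (-(N : ℤ)) N, iseg r j ×ˢ iseg r (j + m) := by
    rintro ⟨x, y⟩ hp
    simp only [mem_setOf_eq] at hp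
    have hx := mem_iseg_self hr x
    have hy := mem_iseg_self hr y
    set j := ⌊x / r⌋; set j' := ⌊y / r⌋
    have hjj' : |j - j'| ≤ (N : ℤ) := by
      rw [abs_le]
      have h1 : (j : ℝ) * r ≤ x := hx.1
      have h2 : x < ((j : ℝ) + 1) * r := hx.2
      have h3 : (j' : ℝ) * r ≤ y := hy.1
      have h4 : y < ((j' : ℝ) + 1) * r := hy.2
      have h5 : |x - y| < (N : ℝ) * r := hp
      rw [abs_lt] at h5
      constructor
      · have hc : ((j' - j : ℤ) : ℝ) < ((N + 1 : ℤ) : ℝ) := by push_cast; nlinarith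
        have := Int.cast_lt.mp hc
        omega
      · have hc : ((j - j' : ℤ) : ℝ) < ((N + 1 : ℤ) : ℝ) := by push_cast; nlinarith
        have := Int.cast_lt.mp hc
        omega
    simp only [mem_iUnion]
    refine ⟨j, j' - j, ?_, hx, by simpa using hy⟩
    simp only [Finset.mem_Icc]
    rw [abs_le] at hjj'; omega
  calc corrE μ ((N : ℝ) * r) ≤ ∑' j : ℤ, (μ.prod μ) (⋃ m ∈ Finset.Icc (-(N : ℤ)) N, iseg r j ×ˢ iseg r (j + m)) :=
        le_trans (measure_mono hcover) (measure_iUnion_le _)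
    _ ≤ ∑' j : ℤ, ∑ m ∈ Finset.Icc (-(N : ℤ)) N, a j * a (j + m) := by
        apply ENNReal.tsum_le_tsum; intro j
        refine le_trans (measure_biUnion_finset_le _ _) ?_
        apply Finset.sum_le_sum; intro m _
        rw [Measure.prod_prod]
    _ ≤ ∑' j : ℤ, ∑ m ∈ Finset.Icc (-(N : ℤ)) N, (a j ^ 2 + a (j + m) ^ 2) := by
        apply ENNReal.tsum_le_tsum; intro j
        apply Finset.sum_le_sum; intro m _
        rcases le_total (a j) (a (j + m)) with h | h
        · calc a j * a (j + m) ≤ a (j + m) * a (j + m) := mul_le_mul_left h _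
            _ = a (j + m) ^ 2 := (sq _).symm
            _ ≤ _ := le_add_self
        · calc a j * a (j + m) ≤ a j * a j := mul_le_mul_right h _
            _ = a j ^ 2 := (sq _).symm
            _ ≤ _ := le_self_add
    _ = ∑ m ∈ Finset.Icc (-(N : ℤ)) N, ∑' j : ℤ, (a j ^ 2 + a (j + m) ^ 2) := by
        rw [Summable.tsum_finsetSum]; intro m _; exact ENNReal.summable
    _ ≤ ∑ m ∈ Finset.Icc (-(N : ℤ)) N, (2 * ∑' j : ℤ, a j ^ 2) := by
        apply Finset.sum_le_sum; intro m _
        rw [ENNReal.tsum_add]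
        have : ∑' j : ℤ, a (j + m) ^ 2 = ∑' j : ℤ, a j ^ 2 :=
          (Equiv.addRight m).tsum_eq (fun j => a j ^ 2)
        rw [this, two_mul]
    _ = (2 * N + 1 : ℕ) * (2 * ∑' j : ℤ, a j ^ 2) := by
        have hcard : (Finset.Icc (-(N : ℤ)) N).card = 2 * N + 1 := by
          rw [Int.card_Icc]; omega
        rw [Finset.sum_const, hcard, nsmul_eq_mul]

lemma corrE_nat_mul_le' (hr : 0 < r) (N : ℕ) :
    corrE μ ((N : ℝ) * r) ≤ (4 * N + 2 : ℕ) * corrE μ r := by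
  refine le_trans (corrE_nat_mul_le μ hr N) ?_
  calc ((2 * N + 1 : ℕ) : ℝ≥0∞) * (2 * ∑' j : ℤ, μ (iseg r j) ^ 2)
      ≤ ((2 * N + 1 : ℕ) : ℝ≥0∞) * (2 * corrE μ r) :=
        mul_le_mul_right (mul_le_mul_right (tsum_sq_le_corrE μ hr) 2) _
    _ = (4 * N + 2 : ℕ) * corrE μ r := by
        rw [← mul_assoc]; congr 1; push_cast; ring

lemma corrR_nat_mul_le (hr : 0 < r) (N : ℕ) :
    corrR μ ((N : ℝ) * r) ≤ (4 * N + 2 : ℝ) * corrR μ r := by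
  have h := corrE_nat_mul_le' μ hr N
  have hfin : ((4 * N + 2 : ℕ) : ℝ≥0∞) * corrE μ r ≠ ⊤ :=
    ENNReal.mul_ne_top (ENNReal.natCast_ne_top _) (corrE_lt_top μ r).ne
  have h2 := ENNReal.toReal_mono hfin h
  rw [ENNReal.toReal_mul, ENNReal.toReal_natCast _] at h2
  refine le_trans h2 (le_of_eq ?_)
  rw [corrR]; push_cast; ring

lemma corrR_linear_lower {M : ℝ} (hμ : μ ≠ 0) (hM : 1 ≤ M) {K : Set ℝ}
    (hK : K ⊆ Icc (-M) M) (hKc : μ Kᶜ = 0) (hr : 0 < r) (hr1 : r ≤ 1) :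
    ((μ univ).toReal * r / (2 * M + 3)) ^ 2 ≤ corrR μ r := by
  classical
  set a : ℤ → ℝ≥0∞ := fun j => μ (iseg r j) with ha
  set F : Finset ℤ := Finset.Icc ⌊-M / r⌋ ⌈M / r⌉ with hF
  have hout : ∀ j : ℤ, j ∉ F → a j = 0 := by
    intro j hj
    simp only [hF, Finset.mem_Icc, not_and_or, not_le] at hj
    have hsub : iseg r j ⊆ Kᶜ := by
      rcases hj with hj | hj
      · intro x hx
        have h1 : (j : ℝ) + 1 ≤ ⌊-M / r⌋ := by exact_mod_cast Int.add_one_le_iff.2 hj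
        have h2 : ((⌊-M / r⌋ : ℝ)) ≤ -M / r := Int.floor_le _
        have hxlt : x < -M := by
          have := hx.2
          have : x < ((j : ℝ) + 1) * r := this
          have hle : ((j : ℝ) + 1) * r ≤ (-M / r) * r := by
            apply mul_le_mul_of_nonneg_right (le_trans h1 h2) hr.le
          have : x < (-M / r) * r := lt_of_lt_of_le this hle
          rwa [div_mul_cancel₀] at this
          exact hr.ne'
        intro hxK
        exact absurd (hK hxK).1 (by linarith)
      · intro x hx
        have h1 : (⌈M / r⌉ : ℝ) + 1 ≤ (j : ℝ) := by exact_mod_cast Int.add_one_le_iff.2 hj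
        have h2 : M / r ≤ (⌈M / r⌉ : ℝ) := Int.le_ceil _
        have hxgt : M < x := by
          have hge : (M / r) * r + r ≤ (j : ℝ) * r := by nlinarith
          have : (M / r) * r = M := by field_simp
          have := hx.1
          nlinarith [hx.1]
        intro hxK
        exact absurd (hK hxK).2 (by linarith)
    exact le_antisymm (le_trans (measure_mono hsub) (le_of_eq hKc)) (by simp)
  have hfc : (⌊-M / r⌋ : ℝ) ≤ (⌈M / r⌉ : ℝ) := by
    have h1 : (⌊-M / r⌋ : ℝ) ≤ -M / r := Int.floor_le _
    have h2 : (M / r : ℝ) ≤ ⌈M / r⌉ := Int.le_ceil _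
    have h3 : -M / r ≤ M / r := by
      rw [div_le_div_iff₀ hr hr]
      nlinarith
    linarith
  have hfc' : ⌊-M / r⌋ ≤ ⌈M / r⌉ := Int.cast_le.mp hfc
  have hFne : F.Nonempty := Finset.nonempty_Icc.2 hfc'
  have huniv : (univ : Set ℝ) = ⋃ j : ℤ, iseg r j := by
    ext x; simp only [mem_univ, true_iff, mem_iUnion]
    exact ⟨⌊x / r⌋, mem_iseg_self hr x⟩
  have hsum : μ univ = ∑ j ∈ F, a j := by
    rw [huniv, measure_iUnion (iseg_disjoint hr) fun j => measurableSet_Ico]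
    exact tsum_eq_sum hout
  have hafin : ∀ j : ℤ, a j ≠ ⊤ :=
    fun j => (lt_of_le_of_lt (measure_mono (subset_univ _)) (measure_lt_top μ univ)).ne
  set m := (μ univ).toReal with hm
  have hm0 : 0 ≤ m := ENNReal.toReal_nonneg
  have hsumR : m = ∑ j ∈ F, (a j).toReal := by
    rw [hm, hsum]; exact ENNReal.toReal_sum fun j _ => hafin j
  have hcard0 : (0 : ℝ) < F.card := by exact_mod_cast Finset.card_pos.2 hFne
  have hex : ∃ j ∈ F, m / F.card ≤ (a j).toReal := by
    apply Finset.exists_le_of_sum_le hFne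
    rw [Finset.sum_const, nsmul_eq_mul, mul_comm, div_mul_cancel₀ _ (ne_of_gt hcard0), hsumR]
  obtain ⟨j, hjF, hAj⟩ := hex
  have hcard' : (F.card : ℝ) * r ≤ 2 * M + 3 := by
    have hcc := Int.card_Icc ⌊-M / r⌋ ⌈M / r⌉
    have h1' : (F.card : ℤ) = ⌈M / r⌉ + 1 - ⌊-M / r⌋ := by rw [hF]; omega
    have h1 : (F.card : ℝ) = ((⌈M / r⌉ + 1 - ⌊-M / r⌋ : ℤ) : ℝ) := by exact_mod_cast h1'
    have hnd : -M / r = -(M / r) := neg_div _ _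
    have hc1 : (⌈M / r⌉ : ℝ) < M / r + 1 := Int.ceil_lt_add_one _
    have hc2 : -M / r - 1 < (⌊-M / r⌋ : ℝ) := Int.sub_one_lt_floor _
    have hdiv : (M / r) * r = M := div_mul_cancel₀ M hr.ne'
    have hdiv2 : (-M / r) * r = -M := div_mul_cancel₀ (-M) hr.ne'
    have h2 : (F.card : ℝ) < M / r + 1 + 1 - (-M / r - 1) := by
      rw [h1]; push_cast; linarith
    have h3 : (F.card : ℝ) * r < (M / r + 3 + M / r) * r :=
      mul_lt_mul_of_pos_right (by linarith) hr
    rw [add_mul, add_mul, hdiv] at h3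
    have : (M / r) * r = M := hdiv
    nlinarith
  have hx0 : 0 ≤ (a j).toReal := ENNReal.toReal_nonneg
  have hstep : m * r / (2 * M + 3) ≤ (a j).toReal := by
    refine le_trans ?_ hAj
    rw [div_le_div_iff₀ (by linarith : (0:ℝ) < 2 * M + 3) hcard0]
    nlinarith [mul_le_mul_of_nonneg_left hcard' hm0]
  calc (m * r / (2 * M + 3)) ^ 2 ≤ (a j).toReal ^ 2 :=
        pow_le_pow_left₀ (by positivity) hstep 2
    _ = (a j ^ 2).toReal := by rw [ENNReal.toReal_pow]
    _ ≤ corrR μ r := ENNReal.toReal_mono (corrE_lt_top μ r).ne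
        (le_trans (ENNReal.le_tsum j) (tsum_sq_le_corrE μ hr))

end Intervals


section Fourier

variable (μ : Measure ℝ) [IsFiniteMeasure μ]

lemma integrable_exp_mul_I (c : ℝ) :
    Integrable (fun x : ℝ => Complex.exp ((c * x : ℝ) * Complex.I)) μ := by
  refine Integrable.mono' (integrable_const 1) ?_ ?_
  · exact (Complex.continuous_exp.comp (by continuity)).aestronglyMeasurable
  · exact Eventually.of_forall fun x => le_of_eq (Complex.norm_exp_ofReal_mul_I _)

lemma normsq_measureFT (s : ℝ) :
    ‖measureFT μ s‖ ^ 2 = ∫ p : ℝ × ℝ, Real.cos (s * (p.1 - p.2)) ∂(μ.prod μ) := by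
  have hconj : (starRingEnd ℂ) (measureFT μ s)
      = ∫ x : ℝ, Complex.exp ((s * x : ℝ) * Complex.I) ∂μ := by
    rw [measureFT, ← integral_conj]
    congr 1; funext x
    rw [← Complex.exp_conj]
    congr 1
    simp only [map_mul, map_neg, Complex.conj_I, Complex.conj_ofReal]
    push_cast
    ring
  have hfm : Integrable (fun x : ℝ => Complex.exp ((-s * x : ℝ) * Complex.I)) μ :=
    integrable_exp_mul_I μ (-s)
  have hmeq : measureFT μ s = ∫ x : ℝ, Complex.exp ((-s * x : ℝ) * Complex.I) ∂μ := by
    rw [measureFT]; congr 1; funext x; congr 1; push_cast; ring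
  have hprodInt : Integrable
      (fun p : ℝ × ℝ => Complex.exp ((-(s * (p.1 - p.2)) : ℝ) * Complex.I)) (μ.prod μ) := by
    refine Integrable.mono' (integrable_const 1) ?_ ?_
    · exact (Complex.continuous_exp.comp (by continuity)).aestronglyMeasurable
    · exact Eventually.of_forall fun p => le_of_eq (Complex.norm_exp_ofReal_mul_I _)
  have hmul : measureFT μ s * (starRingEnd ℂ) (measureFT μ s)
      = ∫ p : ℝ × ℝ, Complex.exp ((-(s * (p.1 - p.2)) : ℝ) * Complex.I) ∂(μ.prod μ) := by
    rw [hconj, hmeq, ← integral_prod_mul]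
    congr 1; funext p
    rw [← Complex.exp_add]
    congr 1
    push_cast
    ring
  have hre : (‖measureFT μ s‖ ^ 2 : ℝ)
      = (measureFT μ s * (starRingEnd ℂ) (measureFT μ s)).re := by
    rw [Complex.mul_conj, Complex.ofReal_re, Complex.normSq_eq_norm_sq]
  rw [hre, hmul]
  have hir := integral_re (𝕜 := ℂ) hprodInt
  simp only [RCLike.re_to_complex] at hir
  rw [← hir]
  congr 1; funext p
  rw [Complex.exp_ofReal_mul_I_re, Real.cos_neg]

lemma stronglyMeasurable_measureFT : StronglyMeasurable fun s : ℝ => measureFT μ s := by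
  have : StronglyMeasurable (fun q : ℝ × ℝ => Complex.exp (-(q.1 * q.2) * Complex.I)) :=
    (Complex.continuous_exp.comp (by continuity)).stronglyMeasurable
  exact this.integral_prod_right'

lemma norm_measureFT_le (s : ℝ) : ‖measureFT μ s‖ ≤ (μ univ).toReal := by
  rw [measureFT]
  have := norm_integral_le_of_norm_le_const (μ := μ)
    (f := fun x : ℝ => Complex.exp (-(s * x) * Complex.I)) (C := 1) ?_
  · simpa [Measure.real] using this
  · refine Eventually.of_forall fun x => ?_
    calc ‖Complex.exp (-(↑s * ↑x) * Complex.I)‖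
        = ‖Complex.exp (((-(s * x) : ℝ) : ℂ) * Complex.I)‖ := by push_cast; ring_nf
      _ ≤ 1 := le_of_eq (Complex.norm_exp_ofReal_mul_I _)

lemma integrable_normsq_measureFT (t : ℝ) :
    Integrable (fun s => ‖measureFT μ s‖ ^ 2) (volume.restrict (Ioc (0:ℝ) t)) := by
  have : IsFiniteMeasure (volume.restrict (Ioc (0:ℝ) t)) :=
    ⟨by rw [Measure.restrict_apply_univ]; simp [Real.volume_Ioc]⟩
  refine Integrable.mono' (integrable_const ((μ univ).toReal ^ 2)) ?_ ?_
  · exact (((stronglyMeasurable_measureFT μ).norm.pow 2)).aestronglyMeasurable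
  · refine Eventually.of_forall fun s => ?_
    rw [Real.norm_eq_abs, abs_of_nonneg (by positivity)]
    exact pow_le_pow_left₀ (norm_nonneg _) (norm_measureFT_le μ s) 2

lemma weighted_swap (t : ℝ) (ht : 0 < t)
    (w : ℝ → ℝ) (hwc : Continuous w) (hwb : ∀ s ∈ Ioc (0:ℝ) t, |w s| ≤ 1) :
    ∫ s in Ioc (0:ℝ) t, w s * ‖measureFT μ s‖ ^ 2
      = ∫ p : ℝ × ℝ, (∫ s in Ioc (0:ℝ) t, w s * Real.cos (s * (p.1 - p.2))) ∂(μ.prod μ) := by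
  have hfin : IsFiniteMeasure (volume.restrict (Ioc (0:ℝ) t)) :=
    ⟨by rw [Measure.restrict_apply_univ]; simp [Real.volume_Ioc]⟩
  have h1 : ∀ s : ℝ, w s * ‖measureFT μ s‖ ^ 2
      = ∫ p : ℝ × ℝ, w s * Real.cos (s * (p.1 - p.2)) ∂(μ.prod μ) := by
    intro s
    rw [normsq_measureFT μ s, ← integral_const_mul]
  have hmeas : AEStronglyMeasurable
      (Function.uncurry fun s (p : ℝ × ℝ) => w s * Real.cos (s * (p.1 - p.2)))
      ((volume.restrict (Ioc (0:ℝ) t)).prod (μ.prod μ)) := by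
    apply Continuous.aestronglyMeasurable
    apply Continuous.mul
    · exact hwc.comp continuous_fst
    · exact Real.continuous_cos.comp (continuous_fst.mul
        (continuous_snd.fst.sub continuous_snd.snd))
  have hae : ∀ᵐ q ∂((volume.restrict (Ioc (0:ℝ) t)).prod (μ.prod μ)),
      q.1 ∈ Ioc (0:ℝ) t := by
    rw [Measure.restrict_prod_eq_prod_univ]
    exact (ae_restrict_mem (measurableSet_Ioc.prod MeasurableSet.univ)).mono
      fun q hq => hq.1
  have hInt : Integrable
      (Function.uncurry fun s (p : ℝ × ℝ) => w s * Real.cos (s * (p.1 - p.2)))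
      ((volume.restrict (Ioc (0:ℝ) t)).prod (μ.prod μ)) := by
    refine Integrable.mono' (integrable_const 1) hmeas ?_
    refine hae.mono fun q hq => ?_
    rw [Function.uncurry]
    simp only [Real.norm_eq_abs, abs_mul]
    calc |w q.1| * |Real.cos (q.1 * (q.2.1 - q.2.2))| ≤ 1 * 1 :=
          mul_le_mul (hwb _ hq) (Real.abs_cos_le_one _) (abs_nonneg _) zero_le_one
      _ = 1 := mul_one 1
  simp only [h1]
  exact integral_integral_swap hInt

end Fourier

section Kernels

lemma integral_Ioc_cos (t u : ℝ) (ht : 0 < t) :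
    ∫ s in Ioc (0:ℝ) t, Real.cos (s * u)
      = (if u = 0 then t else Real.sin (t * u) / u) := by
  rw [← intervalIntegral.integral_of_le ht.le]
  split_ifs with hu
  · subst hu; simp
  · have hd : ∀ x ∈ uIcc (0:ℝ) t,
        HasDerivAt (fun s => Real.sin (s * u) / u) (Real.cos (x * u)) x := by
      intro x _
      have h1 : HasDerivAt (fun s : ℝ => s * u) u x := hasDerivAt_mul_const u
      have h2 : HasDerivAt (fun s : ℝ => Real.sin (s * u)) (Real.cos (x * u) * u) x :=
        h1.sin
      have h3 := h2.div_const u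
      exact h3.congr_deriv (mul_div_cancel_right₀ _ hu)
    rw [intervalIntegral.integral_eq_sub_of_hasDerivAt hd
      (by apply Continuous.intervalIntegrable; continuity)]
    simp

lemma integral_Ioc_fejer (t u : ℝ) (ht : 0 < t) :
    ∫ s in Ioc (0:ℝ) t, (1 - s / t) * Real.cos (s * u)
      = (if u = 0 then t / 2 else (1 - Real.cos (t * u)) / (t * u ^ 2)) := by
  have ht' : t ≠ 0 := ht.ne'
  rw [← intervalIntegral.integral_of_le ht.le]
  split_ifs with hu
  · subst hu
    simp only [mul_zero, Real.cos_zero, mul_one]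
    rw [intervalIntegral.integral_sub intervalIntegrable_const
      (by apply Continuous.intervalIntegrable; continuity)]
    simp only [intervalIntegral.integral_const, smul_eq_mul, sub_zero, mul_one]
    have : ∫ x in (0:ℝ)..t, x / t = (∫ x in (0:ℝ)..t, x) / t := by
      rw [intervalIntegral.integral_div]
    rw [this, integral_id]
    field_simp
    ring
  · have hd : ∀ x ∈ uIcc (0:ℝ) t,
        HasDerivAt (fun s => (1 - s / t) * (Real.sin (s * u) / u)
          - Real.cos (s * u) / (t * u ^ 2)) ((1 - x / t) * Real.cos (x * u)) x := by
      intro x _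
      have h1 : HasDerivAt (fun s : ℝ => s * u) u x := hasDerivAt_mul_const u
      have hsin : HasDerivAt (fun s : ℝ => Real.sin (s * u)) (Real.cos (x * u) * u) x :=
        h1.sin
      have hcos : HasDerivAt (fun s : ℝ => Real.cos (s * u)) (-Real.sin (x * u) * u) x :=
        h1.cos
      have hlin : HasDerivAt (fun s : ℝ => 1 - s / t) (-(1 / t)) x := by
        exact ((hasDerivAt_const x (1:ℝ)).sub ((hasDerivAt_id' x).div_const t)).congr_deriv (by ring)
      have hcomb := (hlin.mul (hsin.div_const u)).sub (hcos.div_const (t * u ^ 2))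
      refine hcomb.congr_deriv ?_
      field_simp
      ring
    rw [intervalIntegral.integral_eq_sub_of_hasDerivAt hd
      (by apply Continuous.intervalIntegrable; continuity)]
    simp only [Real.sin_zero, Real.cos_zero, zero_mul, div_self ht', sub_self, zero_div,
      zero_mul, zero_sub, mul_zero]
    field_simp
    ring

lemma fejer_kernel_lower (t u : ℝ) (ht : 0 < t) :
    (1/5) * t * Set.indicator {u' : ℝ | |u'| < 1/t} (fun _ => (1:ℝ)) u
      ≤ (if u = 0 then t / 2 else (1 - Real.cos (t * u)) / (t * u ^ 2)) := by
  by_cases hmem : u ∈ {u' : ℝ | |u'| < 1/t}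
  · rw [Set.indicator_of_mem hmem]
    have hmem' : |u| < 1/t := hmem
    split_ifs with hu
    · linarith
    · have hu2 : (0:ℝ) < u ^ 2 := by positivity
      have hv1 : |t * u| < 1 := by
        rw [abs_mul, abs_of_pos ht]
        calc t * |u| < t * (1/t) := by exact mul_lt_mul_of_pos_left hmem' ht
          _ = 1 := by field_simp
      set v := t * u with hv
      have hpig : (3:ℝ) < Real.pi := Real.pi_gt_three
      have hhalf : |v/2| ≤ Real.pi / 2 := by
        rw [abs_div, abs_two]
        linarith
      have hs := Real.mul_abs_le_abs_sin hhalf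
      have h1 : (2/Real.pi * |v/2|) ^ 2 ≤ Real.sin (v/2) ^ 2 := by
        calc (2/Real.pi * |v/2|) ^ 2 ≤ |Real.sin (v/2)| ^ 2 :=
              pow_le_pow_left₀ (by positivity) hs 2
          _ = Real.sin (v/2) ^ 2 := sq_abs _
      have hB : (2/Real.pi * |v/2|) ^ 2 = v ^ 2 / Real.pi ^ 2 := by
        rw [mul_pow, div_pow, abs_div, abs_two, div_pow, sq_abs]
        field_simp
      rw [hB] at h1
      have h3 : v ^ 2 ≤ Real.pi ^ 2 * Real.sin (v/2) ^ 2 := by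
        rw [div_le_iff₀ (by positivity)] at h1
        linarith [h1]
      have hcosid : 1 - Real.cos v = 2 * Real.sin (v/2) ^ 2 := by
        have hh := Real.sin_sq_eq_half_sub (v/2)
        have : 2 * (v/2) = v := by ring
        rw [this] at hh
        linarith
      have hpil : Real.pi < 3.15 := Real.pi_lt_d2
      rw [mul_one, le_div_iff₀ (by positivity : (0:ℝ) < t * u ^ 2)]
      have hvv : v ^ 2 = t ^ 2 * u ^ 2 := by rw [hv]; ring
      have hpi2 : Real.pi ^ 2 < 10 := by nlinarith
      have h4 : v ^ 2 ≤ 10 * Real.sin (v/2) ^ 2 := by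
        nlinarith [mul_nonneg (by linarith : (0:ℝ) ≤ 10 - Real.pi ^ 2)
          (sq_nonneg (Real.sin (v/2)))]
      have hgoal : (1/5) * t * (t * u ^ 2) = v ^ 2 / 5 := by rw [hvv]; ring
      linarith
  · rw [Set.indicator_of_notMem hmem, mul_zero]
    split_ifs with hu
    · linarith
    · have : (0:ℝ) ≤ 1 - Real.cos (t * u) := by linarith [Real.cos_le_one (t * u)]
      positivity

lemma sinc_kernel_abs_le (t u : ℝ) (ht : 0 < t) :
    |(if u = 0 then t else Real.sin (t * u) / u)| ≤ t := by
  split_ifs with hu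
  · rw [abs_of_pos ht]
  · rw [abs_div, div_le_iff₀ (abs_pos.2 hu)]
    calc |Real.sin (t * u)| ≤ |t * u| := Real.abs_sin_le_abs
      _ = t * |u| := by rw [abs_mul, abs_of_pos ht]

lemma sinc_dyadic_bound (t M : ℝ) (K : ℕ) (ht : 1 ≤ t) (hM : 1 ≤ M)
    (hK : 2 * M * t ≤ 2 ^ K) (u : ℝ) (hu : |u| ≤ 2 * M) :
    |(if u = 0 then t else Real.sin (t * u) / u)| ≤
      ∑ k ∈ Finset.range (K + 1), t * (2:ℝ)⁻¹ ^ k *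
        Set.indicator {u' : ℝ | |u'| < 2 ^ (k+1) / t} (fun _ => (1:ℝ)) u := by
  have ht0 : 0 < t := lt_of_lt_of_le one_pos ht
  have hterm : ∀ k ∈ Finset.range (K + 1), 0 ≤ t * (2:ℝ)⁻¹ ^ k *
      Set.indicator {u' : ℝ | |u'| < 2 ^ (k+1) / t} (fun _ => (1:ℝ)) u := by
    intro k _
    apply mul_nonneg (by positivity)
    apply Set.indicator_nonneg
    intros; norm_num
  by_cases hsm : t * |u| < 1
  · refine le_trans ?_ (Finset.single_le_sum hterm (Finset.mem_range.2 (Nat.succ_pos K)))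
    have hmem : u ∈ {u' : ℝ | |u'| < 2 ^ (0+1) / t} := by
      simp only [mem_setOf_eq, zero_add, pow_one]
      rw [lt_div_iff₀ ht0, mul_comm]
      calc t * |u| < 1 := hsm
        _ ≤ 2 := one_le_two
    rw [Set.indicator_of_mem hmem, pow_zero, mul_one, mul_one]
    exact sinc_kernel_abs_le t u ht0
  · push_neg at hsm
    have hu0 : u ≠ 0 := by
      intro h; rw [h, abs_zero, mul_zero] at hsm; linarith
    have htu0 : (0:ℝ) < t * |u| := lt_of_lt_of_le one_pos hsm
    set k := ⌊Real.logb 2 (t * |u|)⌋₊ with hk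
    have hk1 : (2:ℝ) ^ k ≤ t * |u| := by
      rw [← Real.rpow_natCast]
      calc (2:ℝ) ^ (k:ℝ) ≤ 2 ^ Real.logb 2 (t * |u|) :=
            Real.rpow_le_rpow_of_exponent_le one_le_two
              (Nat.floor_le (Real.logb_nonneg one_lt_two hsm))
        _ = t * |u| := Real.rpow_logb two_pos (by norm_num) htu0
    have hk2 : t * |u| < 2 ^ (k+1) := by
      have h2 : Real.logb 2 (t * |u|) < (k:ℝ) + 1 := Nat.lt_floor_add_one _
      calc t * |u| = 2 ^ Real.logb 2 (t * |u|) :=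
            (Real.rpow_logb two_pos (by norm_num) htu0).symm
        _ < 2 ^ ((k:ℝ) + 1) := Real.rpow_lt_rpow_of_exponent_lt one_lt_two h2
        _ = 2 ^ (k+1) := by
            rw [← Real.rpow_natCast (2:ℝ) (k+1)]
            push_cast
            ring_nf
    have hkK : k ≤ K := by
      have hcmp : (2:ℝ) ^ k ≤ 2 ^ K := by
        refine le_trans hk1 (le_trans ?_ hK)
        calc t * |u| ≤ t * (2 * M) := by
              exact mul_le_mul_of_nonneg_left hu ht0.le
          _ = 2 * M * t := by ring
      exact_mod_cast (pow_le_pow_iff_right₀ one_lt_two).mp hcmp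
    refine le_trans ?_ (Finset.single_le_sum hterm (Finset.mem_range.2 (Nat.lt_succ_of_le hkK)))
    have hmem : u ∈ {u' : ℝ | |u'| < 2 ^ (k+1) / t} := by
      simp only [mem_setOf_eq]
      rw [lt_div_iff₀ ht0, mul_comm]
      exact hk2
    rw [Set.indicator_of_mem hmem, if_neg hu0, mul_one]
    rw [abs_div]
    have hPpos : (0:ℝ) < 2 ^ k := by positivity
    rw [div_le_iff₀ (abs_pos.2 hu0)]
    have hstep := mul_le_mul_of_nonneg_right hk1 (le_of_lt (inv_pos.2 hPpos))
    rw [mul_inv_cancel₀ hPpos.ne'] at hstep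
    calc |Real.sin (t * u)| ≤ 1 := abs_le.2 ⟨Real.neg_one_le_sin _, Real.sin_le_one _⟩
      _ ≤ t * |u| * (2 ^ k)⁻¹ := hstep
      _ = t * (2:ℝ)⁻¹ ^ k * |u| := by rw [inv_pow]; ring

end Kernels

section MainBounds

def KFej (t u : ℝ) : ℝ := if u = 0 then t / 2 else (1 - Real.cos (t * u)) / (t * u ^ 2)

def KSinc (t u : ℝ) : ℝ := if u = 0 then t else Real.sin (t * u) / u

lemma measurable_KFej (t : ℝ) : Measurable (KFej t) := by
  unfold KFej
  refine Measurable.ite (measurableSet_eq) measurable_const ?_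
  apply Measurable.div
  · exact (continuous_const.sub (Real.continuous_cos.comp (continuous_const.mul continuous_id))).measurable
  · exact (continuous_const.mul (continuous_pow 2)).measurable

lemma measurable_KSinc (t : ℝ) : Measurable (KSinc t) := by
  unfold KSinc
  refine Measurable.ite (measurableSet_eq) measurable_const ?_
  apply Measurable.div
  · exact (Real.continuous_sin.comp (continuous_const.mul continuous_id)).measurable
  · exact measurable_id

lemma abs_KFej_le {t : ℝ} (ht : 0 < t) (u : ℝ) : |KFej t u| ≤ t := by
  unfold KFej
  split_ifs with hu
  · rw [abs_of_pos (by positivity)]; linarith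
  · have hu2 : (0:ℝ) < u ^ 2 := by positivity
    have hnn : (0:ℝ) ≤ 1 - Real.cos (t * u) := by linarith [Real.cos_le_one (t * u)]
    rw [abs_of_nonneg (by positivity)]
    rw [div_le_iff₀ (by positivity)]
    have hid : 1 - Real.cos (t * u) = 2 * Real.sin (t * u / 2) ^ 2 := by
      have hh := Real.sin_sq_eq_half_sub (t * u / 2)
      have h2 : 2 * (t * u / 2) = t * u := by ring
      rw [h2] at hh; linarith
    have hs2 : Real.sin (t * u / 2) ^ 2 ≤ (t * u / 2) ^ 2 := Real.sin_sq_le_sq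
    nlinarith [hs2]

lemma abs_KSinc_le {t : ℝ} (ht : 0 < t) (u : ℝ) : |KSinc t u| ≤ t :=
  sinc_kernel_abs_le t u ht

lemma integral_indicator_corr (μ : Measure ℝ) [IsFiniteMeasure μ] (r : ℝ) :
    ∫ p : ℝ × ℝ, Set.indicator {u' : ℝ | |u'| < r} (fun _ => (1:ℝ)) (p.1 - p.2) ∂(μ.prod μ)
      = corrR μ r := by
  have hfun : (fun p : ℝ × ℝ => Set.indicator {u' : ℝ | |u'| < r} (fun _ => (1:ℝ)) (p.1 - p.2))
      = Set.indicator {p : ℝ × ℝ | |p.1 - p.2| < r} (fun _ => (1:ℝ)) := by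
    funext p
    by_cases h : |p.1 - p.2| < r
    · rw [Set.indicator_of_mem (by exact h), Set.indicator_of_mem (by exact h)]
    · rw [Set.indicator_of_notMem (by exact h), Set.indicator_of_notMem (by exact h)]
  rw [hfun, integral_indicator_const (1:ℝ) (measurableSet_corrSet r), smul_eq_mul, mul_one,
    corrR, corrE, Measure.real]

lemma integrable_indicator_corr (μ : Measure ℝ) [IsFiniteMeasure μ] (r : ℝ) :
    Integrable (fun p : ℝ × ℝ =>
      Set.indicator {u' : ℝ | |u'| < r} (fun _ => (1:ℝ)) (p.1 - p.2)) (μ.prod μ) := by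
  have hfun : (fun p : ℝ × ℝ => Set.indicator {u' : ℝ | |u'| < r} (fun _ => (1:ℝ)) (p.1 - p.2))
      = Set.indicator {p : ℝ × ℝ | |p.1 - p.2| < r} (fun _ => (1:ℝ)) := by
    funext p
    by_cases h : |p.1 - p.2| < r
    · rw [Set.indicator_of_mem (by exact h), Set.indicator_of_mem (by exact h)]
    · rw [Set.indicator_of_notMem (by exact h), Set.indicator_of_notMem (by exact h)]
  rw [hfun]
  exact (integrable_const (1:ℝ)).indicator (measurableSet_corrSet r)

lemma Wavg_lower (μ : Measure ℝ) [IsFiniteMeasure μ] {t : ℝ} (ht : 1 ≤ t) :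
    (1/5) * corrR μ (1/t) ≤ Wavg μ t := by
  have ht0 : 0 < t := lt_of_lt_of_le one_pos ht
  have hIntW := integrable_normsq_measureFT μ t
  have hIntWf : Integrable (fun s => (1 - s/t) * ‖measureFT μ s‖^2)
      (volume.restrict (Ioc (0:ℝ) t)) := by
    have : IsFiniteMeasure (volume.restrict (Ioc (0:ℝ) t)) :=
      ⟨by rw [Measure.restrict_apply_univ]; simp [Real.volume_Ioc]⟩
    refine Integrable.mono' (integrable_const ((μ univ).toReal ^ 2)) ?_ ?_
    · exact ((continuous_const.sub (continuous_id.div_const t)).aestronglyMeasurable).mul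
        ((stronglyMeasurable_measureFT μ).norm.pow 2).aestronglyMeasurable
    · refine (ae_restrict_mem measurableSet_Ioc).mono fun s hs => ?_
      rw [Real.norm_eq_abs, abs_mul]
      have h1 : |1 - s/t| ≤ 1 := by
        rw [abs_le]; constructor
        · have : s/t ≤ 1 := (div_le_one ht0).2 hs.2
          linarith
        · have : 0 < s/t := div_pos hs.1 ht0
          linarith
      calc |1 - s/t| * |‖measureFT μ s‖^2| ≤ 1 * |‖measureFT μ s‖^2| :=
            mul_le_mul_of_nonneg_right h1 (abs_nonneg _)
        _ = ‖measureFT μ s‖^2 := by rw [one_mul, abs_of_nonneg (by positivity)]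
        _ ≤ (μ univ).toReal ^ 2 :=
            pow_le_pow_left₀ (norm_nonneg _) (norm_measureFT_le μ s) 2
  have hstepA : ∫ s in Ioc (0:ℝ) t, (1 - s/t) * ‖measureFT μ s‖^2
      ≤ ∫ s in Ioc (0:ℝ) t, ‖measureFT μ s‖^2 := by
    apply integral_mono_ae hIntWf hIntW
    refine (ae_restrict_mem measurableSet_Ioc).mono fun s hs => ?_
    have h1 : 1 - s/t ≤ 1 := by
      have : 0 < s/t := div_pos hs.1 ht0
      linarith
    calc (1 - s/t) * ‖measureFT μ s‖^2 ≤ 1 * ‖measureFT μ s‖^2 :=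
          mul_le_mul_of_nonneg_right h1 (by positivity)
      _ = ‖measureFT μ s‖^2 := one_mul _
  have hswap := weighted_swap μ t ht0 (fun s => 1 - s/t)
    (continuous_const.sub (continuous_id.div_const t)) ?_
  swap
  · intro s hs
    rw [abs_le]; constructor
    · have : s/t ≤ 1 := (div_le_one ht0).2 hs.2
      linarith
    · have : 0 < s/t := div_pos hs.1 ht0
      linarith
  have hB : ∫ s in Ioc (0:ℝ) t, (1 - s/t) * ‖measureFT μ s‖^2
      = ∫ p : ℝ × ℝ, KFej t (p.1 - p.2) ∂(μ.prod μ) := by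
    rw [hswap]
    exact integral_congr_ae (Eventually.of_forall fun p => by
      simpa [KFej] using integral_Ioc_fejer t (p.1 - p.2) ht0)
  have hKFInt : Integrable (fun p : ℝ × ℝ => KFej t (p.1 - p.2)) (μ.prod μ) := by
    refine Integrable.mono' (integrable_const t) ?_ ?_
    · exact ((measurable_KFej t).comp (measurable_fst.sub measurable_snd)).aestronglyMeasurable
    · exact Eventually.of_forall fun p => abs_KFej_le ht0 _
  have hIndInt : Integrable (fun p : ℝ × ℝ =>
      (1/5) * t * Set.indicator {u' : ℝ | |u'| < 1/t} (fun _ => (1:ℝ)) (p.1 - p.2)) (μ.prod μ) :=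
    (integrable_indicator_corr μ (1/t)).const_mul _
  have hstepC : (1/5) * t * corrR μ (1/t) ≤ ∫ p : ℝ × ℝ, KFej t (p.1 - p.2) ∂(μ.prod μ) := by
    calc (1/5) * t * corrR μ (1/t)
        = ∫ p : ℝ × ℝ, (1/5) * t *
            Set.indicator {u' : ℝ | |u'| < 1/t} (fun _ => (1:ℝ)) (p.1 - p.2) ∂(μ.prod μ) := by
          rw [integral_const_mul, integral_indicator_corr]
      _ ≤ ∫ p : ℝ × ℝ, KFej t (p.1 - p.2) ∂(μ.prod μ) := by
          refine integral_mono hIndInt hKFInt fun p => ?_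
          have := fejer_kernel_lower t (p.1 - p.2) ht0
          simpa [KFej] using this
  rw [Wavg]
  calc (1/5) * corrR μ (1/t) = (1/t) * ((1/5) * t * corrR μ (1/t)) := by
        field_simp
    _ ≤ (1/t) * ∫ s in Ioc (0:ℝ) t, ‖measureFT μ s‖^2 := by
        apply mul_le_mul_of_nonneg_left ?_ (by positivity)
        exact le_trans hstepC (le_trans (le_of_eq hB.symm) hstepA)

lemma Wavg_pos (μ : Measure ℝ) [IsFiniteMeasure μ] (hμ : μ ≠ 0) {t : ℝ} (ht : 1 ≤ t) :
    0 < Wavg μ t := by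
  have ht0 : 0 < t := lt_of_lt_of_le one_pos ht
  have := Wavg_lower μ ht
  have hc := corrR_pos μ hμ (by positivity : (0:ℝ) < 1/t)
  linarith

lemma Wavg_upper (μ : Measure ℝ) [IsFiniteMeasure μ] {M : ℝ} (hM : 1 ≤ M) {K0 : Set ℝ}
    (hK0 : K0 ⊆ Icc (-M) M) (hKc : μ K0ᶜ = 0) {t : ℝ} (ht : 1 ≤ t) {K : ℕ}
    (hK2 : 2 * M * t ≤ 2 ^ K) :
    Wavg μ t ≤ 16 * (K + 1) * corrR μ (1/t) := by
  have ht0 : 0 < t := lt_of_lt_of_le one_pos ht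
  have hswap := weighted_swap μ t ht0 (fun _ => 1) continuous_const
    (by intro s _; norm_num)
  have hA : ∫ s in Ioc (0:ℝ) t, ‖measureFT μ s‖^2
      = ∫ p : ℝ × ℝ, KSinc t (p.1 - p.2) ∂(μ.prod μ) := by
    simp only [one_mul] at hswap
    rw [hswap]
    exact integral_congr_ae (Eventually.of_forall fun p => by
      simpa [KSinc] using integral_Ioc_cos t (p.1 - p.2) ht0)
  have haeB : ∀ᵐ p ∂(μ.prod μ), |p.1 - p.2| ≤ 2 * M := by
    have hnull : (μ.prod μ) ((K0 ×ˢ K0)ᶜ) = 0 := by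
      have hsub : (K0 ×ˢ K0)ᶜ ⊆ (K0ᶜ ×ˢ (univ : Set ℝ)) ∪ ((univ : Set ℝ) ×ˢ K0ᶜ) := by
        rintro ⟨x, y⟩ h
        simp only [Set.mem_compl_iff, Set.mem_prod, not_and_or] at h
        rcases h with h | h
        · exact Or.inl ⟨h, trivial⟩
        · exact Or.inr ⟨trivial, h⟩
      refine measure_mono_null hsub (measure_union_null ?_ ?_) <;>
        rw [Measure.prod_prod] <;> simp [hKc]
    rw [ae_iff]
    refine measure_mono_null ?_ hnull
    intro p hp
    simp only [mem_setOf_eq, not_le] at hp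
    simp only [Set.mem_compl_iff, Set.mem_prod, not_and_or]
    by_contra hcon
    push_neg at hcon
    obtain ⟨h1, h2⟩ := hcon
    have hx := hK0 h1
    have hy := hK0 h2
    simp only [mem_Icc] at hx hy
    have : |p.1 - p.2| ≤ 2 * M := by
      rw [abs_le]; constructor <;> linarith
    linarith
  have hKSInt : Integrable (fun p : ℝ × ℝ => KSinc t (p.1 - p.2)) (μ.prod μ) := by
    refine Integrable.mono' (integrable_const t) ?_ ?_
    · exact ((measurable_KSinc t).comp (measurable_fst.sub measurable_snd)).aestronglyMeasurable
    · exact Eventually.of_forall fun p => abs_KSinc_le ht0 _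
  have hTermInt : ∀ k ∈ Finset.range (K+1), Integrable (fun p : ℝ × ℝ =>
      t * (2:ℝ)⁻¹ ^ k * Set.indicator {u' : ℝ | |u'| < 2 ^ (k+1) / t}
        (fun _ => (1:ℝ)) (p.1 - p.2)) (μ.prod μ) :=
    fun k _ => (integrable_indicator_corr μ (2 ^ (k+1) / t)).const_mul _
  have hSumInt : Integrable (fun p : ℝ × ℝ => ∑ k ∈ Finset.range (K+1),
      t * (2:ℝ)⁻¹ ^ k * Set.indicator {u' : ℝ | |u'| < 2 ^ (k+1) / t}
        (fun _ => (1:ℝ)) (p.1 - p.2)) (μ.prod μ) :=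
    integrable_finset_sum _ hTermInt
  have hstep : ∫ p : ℝ × ℝ, KSinc t (p.1 - p.2) ∂(μ.prod μ)
      ≤ ∫ p : ℝ × ℝ, ∑ k ∈ Finset.range (K+1),
          t * (2:ℝ)⁻¹ ^ k * Set.indicator {u' : ℝ | |u'| < 2 ^ (k+1) / t}
            (fun _ => (1:ℝ)) (p.1 - p.2) ∂(μ.prod μ) := by
    refine integral_mono_ae hKSInt hSumInt (haeB.mono fun p hp => ?_)
    refine le_trans (le_abs_self _) ?_
    have := sinc_dyadic_bound t M K ht hM hK2 (p.1 - p.2) hp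
    simpa [KSinc] using this
  have hval : ∫ p : ℝ × ℝ, ∑ k ∈ Finset.range (K+1),
      t * (2:ℝ)⁻¹ ^ k * Set.indicator {u' : ℝ | |u'| < 2 ^ (k+1) / t}
        (fun _ => (1:ℝ)) (p.1 - p.2) ∂(μ.prod μ)
      = ∑ k ∈ Finset.range (K+1), t * (2:ℝ)⁻¹ ^ k * corrR μ (2 ^ (k+1) / t) := by
    rw [integral_finset_sum _ hTermInt]
    refine Finset.sum_congr rfl fun k _ => ?_
    rw [integral_const_mul, integral_indicator_corr]
  have hcorr : ∀ k : ℕ, corrR μ (2 ^ (k+1) / t) ≤ 2 ^ (k+4) * corrR μ (1/t) := by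
    intro k
    have hr : (0:ℝ) < 1/t := by positivity
    have hcast : ((2 ^ (k+1) : ℕ) : ℝ) * (1/t) = 2 ^ (k+1) / t := by
      push_cast; ring
    have h1 := corrR_nat_mul_le μ hr (2 ^ (k+1))
    rw [hcast] at h1
    refine le_trans h1 ?_
    have h2 : (4 * ((2:ℝ) ^ (k+1)) + 2) ≤ 2 ^ (k+4) := by
      have h3 : (2:ℝ) ≤ 2 ^ (k+3) := by
        calc (2:ℝ) = 2 ^ 1 := (pow_one 2).symm
          _ ≤ 2 ^ (k+3) := pow_le_pow_right₀ one_le_two (by omega)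
      have h4 : (4:ℝ) * 2 ^ (k+1) = 2 ^ (k+3) := by ring
      have h5 : (2:ℝ) ^ (k+4) = 2 * 2 ^ (k+3) := by ring
      linarith
    have := mul_le_mul_of_nonneg_right h2 (corrR_nonneg μ (1/t))
    refine le_trans (le_of_eq ?_) this
    push_cast; ring
  have hfinal : ∑ k ∈ Finset.range (K+1), t * (2:ℝ)⁻¹ ^ k * corrR μ (2 ^ (k+1) / t)
      ≤ 16 * (K+1) * t * corrR μ (1/t) := by
    calc ∑ k ∈ Finset.range (K+1), t * (2:ℝ)⁻¹ ^ k * corrR μ (2 ^ (k+1) / t)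
        ≤ ∑ k ∈ Finset.range (K+1), 16 * t * corrR μ (1/t) := by
          refine Finset.sum_le_sum fun k _ => ?_
          have h1 := hcorr k
          have h2 : t * (2:ℝ)⁻¹ ^ k * corrR μ (2 ^ (k+1) / t)
              ≤ t * (2:ℝ)⁻¹ ^ k * (2 ^ (k+4) * corrR μ (1/t)) :=
            mul_le_mul_of_nonneg_left h1 (by positivity)
          refine le_trans h2 (le_of_eq ?_)
          rw [inv_pow]
          have hne : ((2:ℝ) ^ k) ≠ 0 := by positivity
          field_simp
          ring
      _ = 16 * (K+1) * t * corrR μ (1/t) := by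
          rw [Finset.sum_const, Finset.card_range, nsmul_eq_mul]
          push_cast; ring
  rw [Wavg]
  have hchain : ∫ s in Ioc (0:ℝ) t, ‖measureFT μ s‖^2 ≤ 16 * (K+1) * t * corrR μ (1/t) := by
    rw [hA]
    exact le_trans hstep (le_trans (le_of_eq hval) hfinal)
  calc (1/t) * ∫ s in Ioc (0:ℝ) t, ‖measureFT μ s‖^2
      ≤ (1/t) * (16 * (K+1) * t * corrR μ (1/t)) :=
        mul_le_mul_of_nonneg_left hchain (by positivity)
    _ = 16 * (K+1) * corrR μ (1/t) := by field_simp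

end MainBounds

section Glue

open Filter

lemma map_inv_atTop_real : Filter.map (fun x : ℝ => x⁻¹) atTop = 𝓝[>] (0:ℝ) := by
  rw [← inv_atTop₀]; rfl

lemma liminf_comp_inv (g : ℝ → ℝ) :
    Filter.liminf g (𝓝[>] (0:ℝ)) = Filter.liminf (fun t : ℝ => g t⁻¹) atTop := by
  rw [← map_inv_atTop_real]
  simp only [Filter.liminf, Filter.map_map]
  rfl

lemma limsup_comp_inv (g : ℝ → ℝ) :
    Filter.limsup g (𝓝[>] (0:ℝ)) = Filter.limsup (fun t : ℝ => g t⁻¹) atTop := by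
  rw [← map_inv_atTop_real]
  simp only [Filter.limsup, Filter.map_map]
  rfl

lemma ereal_coe_liminf {h : ℝ → ℝ} {l : Filter ℝ} [l.NeBot]
    (h1 : Filter.IsBoundedUnder (· ≥ ·) l h) (h2 : Filter.IsBoundedUnder (· ≤ ·) l h) :
    Filter.liminf (fun x => ((h x : ℝ) : EReal)) l = ((Filter.liminf h l : ℝ) : EReal) :=
  (EReal.coe_strictMono.monotone.map_liminf_of_continuousAt h
    (continuous_coe_real_ereal.continuousAt) (h2.isCoboundedUnder_ge) h1).symm

lemma ereal_coe_limsup {h : ℝ → ℝ} {l : Filter ℝ} [l.NeBot]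
    (h1 : Filter.IsBoundedUnder (· ≥ ·) l h) (h2 : Filter.IsBoundedUnder (· ≤ ·) l h) :
    Filter.limsup (fun x => ((h x : ℝ) : EReal)) l = ((Filter.limsup h l : ℝ) : EReal) :=
  (EReal.coe_strictMono.monotone.map_limsup_of_continuousAt h
    (continuous_coe_real_ereal.continuousAt) h2 (h1.isCoboundedUnder_le)).symm

lemma real_limsup_neg {v : ℝ → ℝ} {l : Filter ℝ} [l.NeBot]
    (h1 : Filter.IsBoundedUnder (· ≥ ·) l v) (h2 : Filter.IsBoundedUnder (· ≤ ·) l v) :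
    Filter.limsup (fun x => -(v x)) l = - Filter.liminf v l := by
  have ha : Antitone (fun y : ℝ => -y) := fun _ _ h => neg_le_neg h
  exact (ha.map_liminf_of_continuousAt v (continuous_neg.continuousAt)
    (h2.isCoboundedUnder_ge) h1).symm

lemma real_liminf_neg {v : ℝ → ℝ} {l : Filter ℝ} [l.NeBot]
    (h1 : Filter.IsBoundedUnder (· ≥ ·) l v) (h2 : Filter.IsBoundedUnder (· ≤ ·) l v) :
    Filter.liminf (fun x => -(v x)) l = - Filter.limsup v l := by
  have ha : Antitone (fun y : ℝ => -y) := fun _ _ h => neg_le_neg h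
  exact (ha.map_limsup_of_continuousAt v (continuous_neg.continuousAt)
    h2 (h1.isCoboundedUnder_le)).symm

lemma close_liminf_le {p q : ℝ → ℝ}
    (hpge : Filter.IsBoundedUnder (· ≥ ·) (atTop : Filter ℝ) p)
    (hqge : Filter.IsBoundedUnder (· ≥ ·) (atTop : Filter ℝ) q)
    (hqle : Filter.IsBoundedUnder (· ≤ ·) (atTop : Filter ℝ) q)
    (hpq : ∀ δ : ℝ, 0 < δ → ∀ᶠ x in (atTop : Filter ℝ), p x ≤ q x + δ) :
    Filter.liminf p atTop ≤ Filter.liminf q atTop := by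
  by_contra hcon
  push_neg at hcon
  set δ := (Filter.liminf p atTop - Filter.liminf q atTop) / 2 with hδdef
  have hδ0 : 0 < δ := by rw [hδdef]; linarith
  have hqco' : Filter.IsCoboundedUnder (· ≥ ·) (atTop : Filter ℝ) (fun x => q x + δ) := by
    have : Filter.IsBoundedUnder (· ≤ ·) (atTop : Filter ℝ) (fun x => q x + δ) := by
      obtain ⟨c, hc⟩ := hqle
      exact ⟨c + δ, by
        simp only [Filter.eventually_map] at hc ⊢
        exact hc.mono fun x hx => add_le_add_left hx δ⟩
    exact this.isCoboundedUnder_ge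
  have h1 : Filter.liminf p atTop ≤ Filter.liminf (fun x => q x + δ) atTop :=
    Filter.liminf_le_liminf (hpq δ hδ0) hpge hqco'
  have h2 : Filter.liminf (fun x => q x + δ) atTop = Filter.liminf q atTop + δ := by
    have hmono : Monotone (fun y : ℝ => y + δ) := fun _ _ h => add_le_add_left h δ
    exact (hmono.map_liminf_of_continuousAt q
      ((continuous_id.add continuous_const).continuousAt)
      (hqle.isCoboundedUnder_ge) hqge).symm
  rw [h2] at h1
  rw [hδdef] at h1
  linarith

lemma close_limsup_le {p q : ℝ → ℝ}
    (hpge : Filter.IsBoundedUnder (· ≥ ·) (atTop : Filter ℝ) p)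
    (hqge : Filter.IsBoundedUnder (· ≥ ·) (atTop : Filter ℝ) q)
    (hqle : Filter.IsBoundedUnder (· ≤ ·) (atTop : Filter ℝ) q)
    (hpq : ∀ δ : ℝ, 0 < δ → ∀ᶠ x in (atTop : Filter ℝ), p x ≤ q x + δ) :
    Filter.limsup p atTop ≤ Filter.limsup q atTop := by
  by_contra hcon
  push_neg at hcon
  set δ := (Filter.limsup p atTop - Filter.limsup q atTop) / 2 with hδdef
  have hδ0 : 0 < δ := by rw [hδdef]; linarith
  have hqle' : Filter.IsBoundedUnder (· ≤ ·) (atTop : Filter ℝ) (fun x => q x + δ) := by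
    obtain ⟨c, hc⟩ := hqle
    exact ⟨c + δ, by
      simp only [Filter.eventually_map] at hc ⊢
      exact hc.mono fun x hx => add_le_add_left hx δ⟩
  have h1 : Filter.limsup p atTop ≤ Filter.limsup (fun x => q x + δ) atTop :=
    Filter.limsup_le_limsup (hpq δ hδ0) (hpge.isCoboundedUnder_le) hqle'
  have h2 : Filter.limsup (fun x => q x + δ) atTop = Filter.limsup q atTop + δ := by
    have hmono : Monotone (fun y : ℝ => y + δ) := fun _ _ h => add_le_add_left h δ
    exact (hmono.map_limsup_of_continuousAt q
      ((continuous_id.add continuous_const).continuousAt)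
      hqle (hqge.isCoboundedUnder_le)).symm
  rw [h2] at h1
  rw [hδdef] at h1
  linarith

lemma close_liminf_limsup {u v : ℝ → ℝ} {a b : ℝ}
    (hbd : ∀ᶠ x in (atTop : Filter ℝ), a ≤ v x ∧ v x ≤ b)
    (hcl : ∀ δ : ℝ, 0 < δ → ∀ᶠ x in (atTop : Filter ℝ), |u x - v x| ≤ δ) :
    Filter.liminf u atTop = Filter.liminf v atTop ∧
      Filter.limsup u atTop = Filter.limsup v atTop := by
  have hubd : ∀ᶠ x in (atTop : Filter ℝ), a - 1 ≤ u x ∧ u x ≤ b + 1 := by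
    filter_upwards [hbd, hcl 1 one_pos] with x h1 h2
    have h3 := abs_le.1 h2
    exact ⟨by linarith [h1.1, h3.1], by linarith [h1.2, h3.2]⟩
  have hvge : Filter.IsBoundedUnder (· ≥ ·) (atTop : Filter ℝ) v :=
    isBoundedUnder_of_eventually_ge (hbd.mono fun x h => h.1)
  have hvle : Filter.IsBoundedUnder (· ≤ ·) (atTop : Filter ℝ) v :=
    isBoundedUnder_of_eventually_le (hbd.mono fun x h => h.2)
  have huge : Filter.IsBoundedUnder (· ≥ ·) (atTop : Filter ℝ) u :=
    isBoundedUnder_of_eventually_ge (hubd.mono fun x h => h.1)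
  have hule : Filter.IsBoundedUnder (· ≤ ·) (atTop : Filter ℝ) u :=
    isBoundedUnder_of_eventually_le (hubd.mono fun x h => h.2)
  have huv : ∀ δ : ℝ, 0 < δ → ∀ᶠ x in (atTop : Filter ℝ), u x ≤ v x + δ :=
    fun δ hδ => (hcl δ hδ).mono fun x hx => by
      have := abs_le.1 hx; linarith [this.1, this.2]
  have hvu : ∀ δ : ℝ, 0 < δ → ∀ᶠ x in (atTop : Filter ℝ), v x ≤ u x + δ :=
    fun δ hδ => (hcl δ hδ).mono fun x hx => by
      have := abs_le.1 hx; linarith [this.1, this.2]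
  exact ⟨le_antisymm (close_liminf_le huge hvge hvle huv) (close_liminf_le hvge huge hule hvu),
    le_antisymm (close_limsup_le huge hvge hvle huv) (close_limsup_le hvge huge hule hvu)⟩

lemma pow_ceil_logb_ge {x : ℝ} (hx : 1 ≤ x) : x ≤ 2 ^ (⌈Real.logb 2 x⌉₊ : ℕ) := by
  rw [← Real.rpow_natCast]
  calc x = 2 ^ Real.logb 2 x := (Real.rpow_logb two_pos (by norm_num) (by linarith)).symm
    _ ≤ 2 ^ ((⌈Real.logb 2 x⌉₊ : ℕ) : ℝ) :=
      Real.rpow_le_rpow_of_exponent_le one_le_two (Nat.le_ceil _)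

lemma growth_bound {M δ : ℝ} (hM : 1 ≤ M) (hδ : 0 < δ) :
    ∀ᶠ t : ℝ in atTop, 16 * ((⌈Real.logb 2 (2 * M * t)⌉₊ : ℝ) + 1) ≤ t ^ δ := by
  have hlog2 : (0:ℝ) < Real.log 2 := Real.log_pos one_lt_two
  have hC : ∀ᶠ t : ℝ in atTop, 16 * ((⌈Real.logb 2 (2 * M * t)⌉₊ : ℝ) + 1)
      ≤ (16 / Real.log 2) * Real.log t + (16 / Real.log 2 * Real.log (2 * M) + 32) := by
    filter_upwards [eventually_ge_atTop (1:ℝ)] with t ht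
    have h2M : (0:ℝ) < 2 * M := by linarith
    have harg : (1:ℝ) ≤ 2 * M * t := by nlinarith
    have hceil : (⌈Real.logb 2 (2 * M * t)⌉₊ : ℝ) < Real.logb 2 (2 * M * t) + 1 :=
      Nat.ceil_lt_add_one (Real.logb_nonneg one_lt_two harg)
    have hmul : Real.log (2 * M * t) = Real.log (2 * M) + Real.log t :=
      Real.log_mul (ne_of_gt h2M) (by linarith)
    have e2 : Real.logb 2 (2 * M * t) = (Real.log (2 * M) + Real.log t) / Real.log 2 := by
      rw [Real.logb, hmul]
    have e : (16 / Real.log 2) * Real.log t + (16 / Real.log 2) * Real.log (2 * M)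
        = 16 * ((Real.log (2 * M) + Real.log t) / Real.log 2) := by
      field_simp; ring
    have hceil' : (⌈Real.logb 2 (2 * M * t)⌉₊ : ℝ)
        < (Real.log (2 * M) + Real.log t) / Real.log 2 + 1 := by
      rw [← e2]; exact hceil
    linarith
  have ho : (fun t : ℝ => (16 / Real.log 2) * Real.log t
        + (16 / Real.log 2 * Real.log (2 * M) + 32))
      =o[atTop] fun t : ℝ => t ^ δ := by
    apply Asymptotics.IsLittleO.add
    · exact (isLittleO_log_rpow_atTop hδ).const_mul_left _
    · refine Asymptotics.isLittleO_const_left.2 (Or.inr ?_)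
      exact tendsto_norm_atTop_atTop.comp (tendsto_rpow_atTop hδ)
  filter_upwards [hC, ho.def one_pos, eventually_ge_atTop (0:ℝ)] with t h1 h2 h3
  rw [Real.norm_eq_abs, Real.norm_eq_abs, one_mul] at h2
  have habs : |t ^ δ| = t ^ δ := abs_of_nonneg (Real.rpow_nonneg h3 δ)
  calc 16 * ((⌈Real.logb 2 (2 * M * t)⌉₊ : ℝ) + 1)
      ≤ (16 / Real.log 2) * Real.log t + (16 / Real.log 2 * Real.log (2 * M) + 32) := h1
    _ ≤ |(16 / Real.log 2) * Real.log t + (16 / Real.log 2 * Real.log (2 * M) + 32)| :=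
      le_abs_self _
    _ ≤ |t ^ δ| := h2
    _ = t ^ δ := habs

end Glue


def gcorr (μ : Measure ℝ) (ε : ℝ) : ℝ := Real.log (corrR μ ε) / Real.log ε

def fW (μ : Measure ℝ) (t : ℝ) : ℝ := Real.log (Wavg μ t) / Real.log t

/-- For a nonzero finite compactly supported Borel measure on `ℝ`,
`liminf ln W_μ(t)/ln t = -D⁺_μ(2)` and `limsup ln W_μ(t)/ln t = -D⁻_μ(2)`. -/
theorem stmt_17 (μ : Measure ℝ) [IsFiniteMeasure μ] (hμ : μ ≠ 0)
    (hsupp : ∃ K : Set ℝ, IsCompact K ∧ μ Kᶜ = 0) :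
    Filter.liminf (fun t : ℝ => ((Real.log (Wavg μ t) / Real.log t : ℝ) : EReal))
        Filter.atTop = -(DUp2 μ) ∧
      Filter.limsup (fun t : ℝ => ((Real.log (Wavg μ t) / Real.log t : ℝ) : EReal))
        Filter.atTop = -(DLow2 μ) := by
  classical
  obtain ⟨Kset, hKcomp, hKnull⟩ := hsupp
  obtain ⟨R, hR⟩ := hKcomp.isBounded.subset_closedBall (0:ℝ)
  set M : ℝ := max R 1 with hMdef
  have hM1 : (1:ℝ) ≤ M := le_max_right R 1
  have hKsub : Kset ⊆ Icc (-M) M := by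
    intro x hx
    have h2 := hR hx
    rw [Real.closedBall_eq_Icc] at h2
    simp only [zero_sub, zero_add] at h2
    exact ⟨le_trans (neg_le_neg (le_max_left R 1)) h2.1, le_trans h2.2 (le_max_left R 1)⟩
  have hμuniv : 0 < (μ univ).toReal :=
    ENNReal.toReal_pos (by simpa [Measure.measure_univ_eq_zero] using hμ)
      (measure_lt_top μ univ).ne
  set c0 : ℝ := (μ univ).toReal / (2 * M + 3) with hc0def
  have hc0pos : 0 < c0 := div_pos hμuniv (by linarith)
  -- bounds for gcorr near 0⁺
  have hgbd : ∀ᶠ ε in 𝓝[>] (0:ℝ), -1 ≤ gcorr μ ε ∧ gcorr μ ε ≤ 3 := by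
    have hlogbot : Tendsto Real.log (𝓝[>] (0:ℝ)) atBot :=
      Real.tendsto_log_nhdsGT_zero
    have hnegtop : Tendsto (fun ε : ℝ => -Real.log ε) (𝓝[>] (0:ℝ)) atTop :=
      tendsto_neg_atBot_atTop.comp hlogbot
    have hqgen : ∀ c : ℝ, Tendsto (fun ε : ℝ => c / Real.log ε) (𝓝[>] (0:ℝ)) (𝓝 0) := by
      intro c
      have h := (hnegtop.const_div_atTop c).neg
      rw [neg_zero] at h
      refine h.congr fun ε => ?_
      rw [div_neg, neg_neg]
    filter_upwards [Metric.tendsto_nhds.mp (hqgen (Real.log ((μ univ).toReal ^ 2))) 1 one_pos,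
      Metric.tendsto_nhds.mp (hqgen (Real.log (c0 ^ 2))) 1 one_pos,
      Ioo_mem_nhdsGT_of_mem (Set.left_mem_Ico.2 one_pos)] with ε h1 h2 hεI
    obtain ⟨hεpos, hεlt⟩ := hεI
    rw [Real.dist_eq, sub_zero] at h1 h2
    have hlogneg : Real.log ε < 0 := Real.log_neg hεpos hεlt
    have hcorrpos : 0 < corrR μ ε := corrR_pos μ hμ hεpos
    have hcorrle : corrR μ ε ≤ (μ univ).toReal ^ 2 := corrR_le μ ε
    have hcorrge : (c0 * ε) ^ 2 ≤ corrR μ ε := by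
      have hlin := corrR_linear_lower μ hμ hM1 hKsub hKnull hεpos hεlt.le
      calc (c0 * ε) ^ 2 = ((μ univ).toReal * ε / (2 * M + 3)) ^ 2 := by
            rw [hc0def]; ring
        _ ≤ corrR μ ε := hlin
    have habs1 := abs_lt.1 h1
    have habs2 := abs_lt.1 h2
    constructor
    · have hlogle : Real.log (corrR μ ε) ≤ Real.log ((μ univ).toReal ^ 2) :=
        Real.log_le_log hcorrpos hcorrle
      have hdiv : Real.log ((μ univ).toReal ^ 2) / Real.log ε ≤ gcorr μ ε := by
        unfold gcorr
        have hnn : 0 ≤ (Real.log (corrR μ ε) - Real.log ((μ univ).toReal ^ 2)) / Real.log ε :=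
          div_nonneg_of_nonpos (by linarith) hlogneg.le
        rw [sub_div] at hnn
        linarith
      linarith [habs1.1]
    · have hlogge : Real.log ((c0 * ε) ^ 2) ≤ Real.log (corrR μ ε) :=
        Real.log_le_log (by positivity) hcorrge
      have hexp : Real.log ((c0 * ε) ^ 2) = Real.log (c0 ^ 2) + 2 * Real.log ε := by
        rw [mul_pow, Real.log_mul (by positivity) (by positivity), Real.log_pow,
          Real.log_pow]
        push_cast; ring
      have hdiv : gcorr μ ε ≤ (Real.log (c0 ^ 2) + 2 * Real.log ε) / Real.log ε := by
        unfold gcorr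
        have hnn : 0 ≤ ((Real.log (c0 ^ 2) + 2 * Real.log ε) - Real.log (corrR μ ε))
            / Real.log ε := div_nonneg_of_nonpos (by linarith) hlogneg.le
        rw [sub_div] at hnn
        linarith
      have hsplit : (Real.log (c0 ^ 2) + 2 * Real.log ε) / Real.log ε
          = Real.log (c0 ^ 2) / Real.log ε + 2 := by
        rw [add_div, mul_div_assoc, div_self hlogneg.ne, mul_one]
      linarith [habs2.2]
  -- closeness of fW and -(gcorr ∘ inv)
  have hE : ∀ δ : ℝ, 0 < δ → ∀ᶠ t in (atTop : Filter ℝ),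
      |fW μ t - (-(gcorr μ t⁻¹))| ≤ δ := by
    intro δ hδ
    have hconst : Tendsto (fun t : ℝ => Real.log (1/5) / Real.log t) atTop (𝓝 0) :=
      tendsto_const_nhds.div_atTop Real.tendsto_log_atTop
    filter_upwards [growth_bound hM1 hδ, Metric.tendsto_nhds.mp hconst δ hδ,
      eventually_ge_atTop (2:ℝ)] with t hgt hct ht2
    have ht1 : (1:ℝ) ≤ t := by linarith
    have ht0 : (0:ℝ) < t := by linarith
    have hlogt : 0 < Real.log t := Real.log_pos (by linarith)
    have hP : 0 < corrR μ (1/t) := corrR_pos μ hμ (by positivity)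
    have hWpos : 0 < Wavg μ t := Wavg_pos μ hμ ht1
    have hW1 : (1/5) * corrR μ (1/t) ≤ Wavg μ t := Wavg_lower μ ht1
    have hargs : (1:ℝ) ≤ 2 * M * t := by nlinarith
    have hK2 : 2 * M * t ≤ 2 ^ (⌈Real.logb 2 (2 * M * t)⌉₊) := pow_ceil_logb_ge hargs
    have hW2 := Wavg_upper μ hM1 hKsub hKnull ht1 hK2
    have hW2' : Wavg μ t ≤ t ^ δ * corrR μ (1/t) := by
      refine le_trans hW2 (mul_le_mul_of_nonneg_right ?_ (corrR_nonneg μ (1/t)))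
      exact_mod_cast hgt
    have hlow : Real.log (1/5) + Real.log (corrR μ (1/t)) ≤ Real.log (Wavg μ t) := by
      rw [← Real.log_mul (by norm_num) hP.ne']
      exact Real.log_le_log (by positivity) hW1
    have hup : Real.log (Wavg μ t) ≤ δ * Real.log t + Real.log (corrR μ (1/t)) := by
      rw [← Real.log_rpow ht0, ← Real.log_mul (by positivity) hP.ne']
      exact Real.log_le_log hWpos hW2'
    have hginv : -(gcorr μ t⁻¹) = Real.log (corrR μ (1/t)) / Real.log t := by
      unfold gcorr
      rw [Real.log_inv, div_neg, neg_neg, ← one_div]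
    have hfid : fW μ t - (-(gcorr μ t⁻¹))
        = (Real.log (Wavg μ t) - Real.log (corrR μ (1/t))) / Real.log t := by
      rw [hginv]
      unfold fW
      rw [div_sub_div_same]
    rw [hfid, abs_le]
    rw [Real.dist_eq, sub_zero] at hct
    have hct' := abs_lt.1 hct
    constructor
    · rw [le_div_iff₀ hlogt]
      have h5 : -δ < Real.log (1/5) / Real.log t := hct'.1
      rw [lt_div_iff₀ hlogt] at h5
      linarith
    · rw [div_le_iff₀ hlogt]
      linarith
  -- transfer gcorr bounds to atTop along t ↦ t⁻¹
  have hgbd' : ∀ᶠ t in (atTop : Filter ℝ), -1 ≤ gcorr μ t⁻¹ ∧ gcorr μ t⁻¹ ≤ 3 :=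
    tendsto_inv_atTop_nhdsGT_zero.eventually hgbd
  have hvbd : ∀ᶠ t in (atTop : Filter ℝ), -3 ≤ -(gcorr μ t⁻¹) ∧ -(gcorr μ t⁻¹) ≤ 1 :=
    hgbd'.mono fun t h => ⟨by linarith [h.2], by linarith [h.1]⟩
  have hclose := close_liminf_limsup (u := fW μ) (v := fun t => -(gcorr μ t⁻¹)) hvbd hE
  have hvge : Filter.IsBoundedUnder (· ≥ ·) (atTop : Filter ℝ) (fun t => gcorr μ t⁻¹) :=
    isBoundedUnder_of_eventually_ge (hgbd'.mono fun t h => h.1)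
  have hvle : Filter.IsBoundedUnder (· ≤ ·) (atTop : Filter ℝ) (fun t => gcorr μ t⁻¹) :=
    isBoundedUnder_of_eventually_le (hgbd'.mono fun t h => h.2)
  have hfbd : ∀ᶠ t in (atTop : Filter ℝ), -4 ≤ fW μ t ∧ fW μ t ≤ 2 := by
    filter_upwards [hE 1 one_pos, hvbd] with t h1 h2
    have h3 := abs_le.1 h1
    exact ⟨by linarith [h2.1, h3.1], by linarith [h2.2, h3.2]⟩
  have hfge : Filter.IsBoundedUnder (· ≥ ·) (atTop : Filter ℝ) (fW μ) :=
    isBoundedUnder_of_eventually_ge (hfbd.mono fun t h => h.1)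
  have hfle : Filter.IsBoundedUnder (· ≤ ·) (atTop : Filter ℝ) (fW μ) :=
    isBoundedUnder_of_eventually_le (hfbd.mono fun t h => h.2)
  have hg0ge : Filter.IsBoundedUnder (· ≥ ·) (𝓝[>] (0:ℝ)) (gcorr μ) :=
    isBoundedUnder_of_eventually_ge (hgbd.mono fun ε h => h.1)
  have hg0le : Filter.IsBoundedUnder (· ≤ ·) (𝓝[>] (0:ℝ)) (gcorr μ) :=
    isBoundedUnder_of_eventually_le (hgbd.mono fun ε h => h.2)
  have hfx : (fun ε : ℝ =>
      ((Real.log (∫ x, (μ (Metric.ball x ε)).toReal ∂μ) / Real.log ε : ℝ) : EReal))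
      = fun ε : ℝ => ((gcorr μ ε : ℝ) : EReal) := by
    funext ε
    rw [integral_ball_eq_corrR]
    rfl
  have hDUp : DUp2 μ = ((Filter.limsup (gcorr μ) (𝓝[>] (0:ℝ)) : ℝ) : EReal) := by
    rw [DUp2, hfx]
    exact ereal_coe_limsup hg0ge hg0le
  have hDLow : DLow2 μ = ((Filter.liminf (gcorr μ) (𝓝[>] (0:ℝ)) : ℝ) : EReal) := by
    rw [DLow2, hfx]
    exact ereal_coe_liminf hg0ge hg0le
  have hWcoe_liminf : Filter.liminf
      (fun t : ℝ => ((Real.log (Wavg μ t) / Real.log t : ℝ) : EReal)) atTop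
      = ((Filter.liminf (fW μ) atTop : ℝ) : EReal) :=
    ereal_coe_liminf hfge hfle
  have hWcoe_limsup : Filter.limsup
      (fun t : ℝ => ((Real.log (Wavg μ t) / Real.log t : ℝ) : EReal)) atTop
      = ((Filter.limsup (fW μ) atTop : ℝ) : EReal) :=
    ereal_coe_limsup hfge hfle
  constructor
  · calc Filter.liminf (fun t : ℝ => ((Real.log (Wavg μ t) / Real.log t : ℝ) : EReal)) atTop
        = ((Filter.liminf (fW μ) atTop : ℝ) : EReal) := hWcoe_liminf
      _ = ((-(Filter.limsup (gcorr μ) (𝓝[>] (0:ℝ))) : ℝ) : EReal) := by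
          rw [hclose.1]
          congr 1
          rw [real_liminf_neg hvge hvle, limsup_comp_inv (gcorr μ)]
      _ = -(DUp2 μ) := by rw [EReal.coe_neg, hDUp]
  · calc Filter.limsup (fun t : ℝ => ((Real.log (Wavg μ t) / Real.log t : ℝ) : EReal)) atTop
        = ((Filter.limsup (fW μ) atTop : ℝ) : EReal) := hWcoe_limsup
      _ = ((-(Filter.liminf (gcorr μ) (𝓝[>] (0:ℝ))) : ℝ) : EReal) := by
          rw [hclose.2]
          congr 1
          rw [real_limsup_neg hvge hvle, liminf_comp_inv (gcorr μ)]
      _ = -(DLow2 μ) := by rw [EReal.coe_neg, hDLow]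
end
end

section
/- Let μ be a finite positive Borel measure on ℝ and let x ∈ ℝ be such that μ(B(x;ε)) > 0 for every ε > 0. Then liminf_{t→∞} ln(∫_ℝ e^(−2t|x−y|) dμ(y))/ln t = −d⁺_μ(x) and limsup_{t→∞} ln(∫_ℝ e^(−2t|x−y|) dμ(y))/ln t = −d⁻_μ(x). -/
open MeasureTheory Filter Set Metric
open scoped ENNReal Topology Classical

noncomputable section

/-! With `m(r) = μ(B(x;r))` and `F(t) = ∫ e^{-2t|x-y|} dμ(y)`, splitting the integral at
radius `r` gives `e⁻² m(1/t) ≤ F(t) ≤ m(r) + μ(ℝ) e^{-2tr}`. The lower bound gives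
`ln F(t) / ln t ≥ ln m(1/t) / ln t - o(1)`. In the upper bound take `r = 1/t` at time `t^e`, `e > 1`:
the tail `μ(ℝ) e^{-2t^{e-1}}` is smaller than any power of `t`, so `m(1/t) < t^a` with `a < 0`
forces `ln F(t^e) / ln t^e ≲ a / e`, and `e` can be taken as close to `1` as needed; since `F` is
bounded, `ln F(t) / ln t` has no positive limit points, so only `a < 0` matters. Comparing along
real thresholds gives equality of the liminfs and of the limsups, and `ε = 1/t` turns
`ln m(1/t) / ln t` into `-ln m(ε) / ln ε`. -/

section Comparison

variable {α : Type*} {l : Filter α} {u v : α → ℝ}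

theorem liminf_coe_le_liminf_coe_of_lt_imp_lt
    (H : ∀ a b : ℝ, b < a → ∀ᶠ t in l, a < v t → b < u t) :
    liminf (fun t => (v t : EReal)) l ≤ liminf (fun t => (u t : EReal)) l := by
  refine EReal.ge_of_forall_gt_iff_ge.1 fun b hb => ?_
  obtain ⟨a, hba, ha⟩ := EReal.exists_between_coe_real hb
  have hv : ∀ᶠ t in l, (a : EReal) < v t := eventually_lt_of_lt_liminf ha
  refine le_liminf_of_le (by isBoundedDefault) ?_
  filter_upwards [hv, H a b (EReal.coe_lt_coe_iff.1 hba)] with t hvt hu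
  exact_mod_cast (hu (EReal.coe_lt_coe_iff.1 hvt)).le

theorem limsup_coe_le_limsup_coe_of_lt_imp_lt
    (H : ∀ a b : ℝ, b < a → ∀ᶠ t in l, a < v t → b < u t) :
    limsup (fun t => (v t : EReal)) l ≤ limsup (fun t => (u t : EReal)) l := by
  refine EReal.ge_of_forall_gt_iff_ge.1 fun b hb => ?_
  obtain ⟨a, hba, ha⟩ := EReal.exists_between_coe_real hb
  have hv : ∃ᶠ t in l, (a : EReal) < v t := frequently_lt_of_lt_limsup (by isBoundedDefault) ha
  refine le_limsup_of_frequently_le ?_ (by isBoundedDefault)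
  refine (hv.and_eventually (H a b (EReal.coe_lt_coe_iff.1 hba))).mono fun t ⟨hvt, hu⟩ => ?_
  exact_mod_cast (hu (EReal.coe_lt_coe_iff.1 hvt)).le

theorem liminf_coe_le_liminf_coe_of_lt_imp_comp_le [l.NeBot]
    (H₀ : limsup (fun t => (u t : EReal)) l ≤ 0)
    (H : ∀ a b : ℝ, a < b → b < 0 →
      ∃ φ : α → α, map φ l = l ∧ ∀ᶠ t in l, v t < a → u (φ t) ≤ b) :
    liminf (fun t => (u t : EReal)) l ≤ liminf (fun t => (v t : EReal)) l := by
  refine EReal.le_of_forall_lt_iff_le.1 fun b hb => ?_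
  rcases le_or_gt 0 b with hb₀ | hb₀
  · exact (liminf_le_limsup (by isBoundedDefault) (by isBoundedDefault)).trans
      (H₀.trans (EReal.coe_nonneg.2 hb₀))
  obtain ⟨a, hva, hab⟩ := EReal.exists_between_coe_real hb
  obtain ⟨φ, hφ, hφu⟩ := H a b (EReal.coe_lt_coe_iff.1 hab) hb₀
  have hv : ∃ᶠ t in l, v t < a := (frequently_lt_of_liminf_lt (by isBoundedDefault) hva).mono
    fun t ht => EReal.coe_lt_coe_iff.1 ht
  have hu : ∃ᶠ s in map φ l, u s ≤ b := frequently_map.2 <|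
    (hv.and_eventually hφu).mono fun t ⟨hvt, h⟩ => h hvt
  rw [hφ] at hu
  exact liminf_le_of_frequently_le (hu.mono fun t ht => EReal.coe_le_coe_iff.2 ht)

theorem limsup_coe_le_limsup_coe_of_lt_imp_comp_le
    (H₀ : limsup (fun t => (u t : EReal)) l ≤ 0)
    (H : ∀ a b : ℝ, a < b → b < 0 →
      ∃ φ : α → α, map φ l = l ∧ ∀ᶠ t in l, v t < a → u (φ t) ≤ b) :
    limsup (fun t => (u t : EReal)) l ≤ limsup (fun t => (v t : EReal)) l := by
  refine EReal.le_of_forall_lt_iff_le.1 fun b hb => ?_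
  rcases le_or_gt 0 b with hb₀ | hb₀
  · exact H₀.trans (EReal.coe_nonneg.2 hb₀)
  obtain ⟨a, hva, hab⟩ := EReal.exists_between_coe_real hb
  obtain ⟨φ, hφ, hφu⟩ := H a b (EReal.coe_lt_coe_iff.1 hab) hb₀
  have hv : ∀ᶠ t in l, v t < a := (eventually_lt_of_limsup_lt hva).mono
    fun t ht => EReal.coe_lt_coe_iff.1 ht
  have hu : ∀ᶠ s in map φ l, u s ≤ b := eventually_map.2 (hv.mp hφu)
  rw [hφ] at hu
  exact limsup_le_of_le (by isBoundedDefault) (hu.mono fun t ht => EReal.coe_le_coe_iff.2 ht)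

end Comparison

theorem Real.map_rpow_atTop {e : ℝ} (he : 0 < e) : map (fun t : ℝ => t ^ e) atTop = atTop := by
  refine le_antisymm (tendsto_rpow_atTop he) ?_
  calc atTop = map (fun s : ℝ => (s ^ e⁻¹) ^ e) atTop := by
        rw [map_congr ((eventually_ge_atTop 0).mono fun s hs => Real.rpow_inv_rpow hs he.ne'),
          map_id']
    _ = map (fun t : ℝ => t ^ e) (map (fun s => s ^ e⁻¹) atTop) := by
        rw [map_map]; rfl
    _ ≤ map (fun t : ℝ => t ^ e) atTop := map_mono (tendsto_rpow_atTop (inv_pos.2 he))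

theorem eventually_mul_exp_neg_mul_rpow_le_rpow (C a : ℝ) {c κ : ℝ} (hc : 0 < c) (hκ : 0 < κ) :
    ∀ᶠ t in atTop, C * Real.exp (-(c * t ^ κ)) ≤ t ^ a := by
  have hdecay : (fun t : ℝ => C * Real.exp (-(c * t ^ κ))) =o[atTop] fun t => t ^ a := by
    refine ((isLittleO_exp_neg_mul_rpow_atTop hc (a / κ)).comp_tendsto
      (tendsto_rpow_atTop hκ)).const_mul_left C |>.congr' (by simp [neg_mul]) ?_
    filter_upwards [eventually_ge_atTop 0] with t ht
    simp [← Real.rpow_mul ht, mul_div_cancel₀ _ hκ.ne']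
  filter_upwards [hdecay.bound one_pos, eventually_ge_atTop 0] with t ht ht₀
  rw [one_mul, Real.norm_of_nonneg (Real.rpow_nonneg ht₀ a)] at ht
  exact (le_abs_self _).trans ht

def distLaplace (μ : Measure ℝ) (x t : ℝ) : ℝ := ∫ y, Real.exp (-2 * t * |x - y|) ∂μ

section DistLaplace

variable (μ : Measure ℝ) [IsFiniteMeasure μ] (x : ℝ)

theorem integrable_exp_neg_mul_abs_sub {t : ℝ} (ht : 0 ≤ t) :
    Integrable (fun y => Real.exp (-2 * t * |x - y|)) μ := by
  refine (integrable_const (1 : ℝ)).mono' (by fun_prop) (ae_of_all _ fun y => ?_)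
  rw [Real.norm_of_nonneg (Real.exp_pos _).le, Real.exp_le_one_iff]
  nlinarith [abs_nonneg (x - y)]

theorem exp_neg_two_mul_measureReal_ball_le_distLaplace {t : ℝ} (ht : 0 < t) :
    Real.exp (-2) * μ.real (ball x t⁻¹) ≤ distLaplace μ x t := by
  have hint := integrable_exp_neg_mul_abs_sub μ x ht.le
  calc Real.exp (-2) * μ.real (ball x t⁻¹)
      ≤ ∫ y in ball x t⁻¹, Real.exp (-2 * t * |x - y|) ∂μ := by
        refine setIntegral_ge_of_const_le_real measurableSet_ball (measure_ne_top μ _)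
          (fun y hy => Real.exp_le_exp.2 ?_) hint.integrableOn
        rw [mem_ball, Real.dist_eq, abs_sub_comm] at hy
        have := mul_lt_mul_of_pos_left hy ht
        rw [mul_inv_cancel₀ ht.ne'] at this
        linarith
    _ ≤ distLaplace μ x t :=
        setIntegral_le_integral hint (ae_of_all _ fun y => (Real.exp_pos _).le)

theorem distLaplace_le_measureReal_ball_add {t : ℝ} (ht : 0 ≤ t) (R : ℝ) :
    distLaplace μ x t ≤ μ.real (ball x R) + Real.exp (-(2 * t * R)) * μ.real univ := by
  have hint := integrable_exp_neg_mul_abs_sub μ x ht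
  rw [distLaplace, ← integral_add_compl measurableSet_ball hint]
  gcongr
  · calc ∫ y in ball x R, Real.exp (-2 * t * |x - y|) ∂μ ≤ ∫ _ in ball x R, (1 : ℝ) ∂μ :=
          setIntegral_mono_on hint.integrableOn (integrable_const _).integrableOn
            measurableSet_ball fun y _ => Real.exp_le_one_iff.2 (by nlinarith [abs_nonneg (x - y)])
      _ = μ.real (ball x R) := by simp
  · calc ∫ y in (ball x R)ᶜ, Real.exp (-2 * t * |x - y|) ∂μ
        ≤ ∫ _ in (ball x R)ᶜ, Real.exp (-(2 * t * R)) ∂μ := by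
          refine setIntegral_mono_on hint.integrableOn (integrable_const _).integrableOn
            measurableSet_ball.compl fun y hy => Real.exp_le_exp.2 ?_
          rw [mem_compl_iff, mem_ball, Real.dist_eq, abs_sub_comm, not_lt] at hy
          nlinarith
      _ = μ.real (ball x R)ᶜ * Real.exp (-(2 * t * R)) := by simp
      _ ≤ Real.exp (-(2 * t * R)) * μ.real univ := by
          rw [mul_comm]; gcongr; exacts [measure_ne_top μ _, subset_univ _]

theorem distLaplace_le_measureReal_univ {t : ℝ} (ht : 0 ≤ t) :
    distLaplace μ x t ≤ μ.real univ := by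
  simpa using distLaplace_le_measureReal_ball_add μ x ht 0

variable {μ x}

theorem measureReal_ball_pos (hx : ∀ ε > (0 : ℝ), 0 < μ (ball x ε)) {ε : ℝ} (hε : 0 < ε) :
    0 < μ.real (ball x ε) :=
  ENNReal.toReal_pos (hx ε hε).ne' (measure_ne_top μ _)

theorem distLaplace_pos (hx : ∀ ε > (0 : ℝ), 0 < μ (ball x ε)) {t : ℝ} (ht : 0 < t) :
    0 < distLaplace μ x t :=
  lt_of_lt_of_le (by have := measureReal_ball_pos hx (inv_pos.2 ht); positivity)
    (exp_neg_two_mul_measureReal_ball_le_distLaplace μ x ht)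

end DistLaplace

section Asymptotics

variable {μ : Measure ℝ} [IsFiniteMeasure μ] {x : ℝ}

theorem log_measureReal_ball_sub_two_le (hx : ∀ ε > (0 : ℝ), 0 < μ (ball x ε)) {t : ℝ}
    (ht : 0 < t) : Real.log (μ.real (ball x t⁻¹)) - 2 ≤ Real.log (distLaplace μ x t) := by
  have hm := measureReal_ball_pos hx (inv_pos.2 ht)
  calc Real.log (μ.real (ball x t⁻¹)) - 2 = Real.log (Real.exp (-2) * μ.real (ball x t⁻¹)) := by
        rw [Real.log_mul (Real.exp_pos _).ne' hm.ne', Real.log_exp]; ring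
    _ ≤ Real.log (distLaplace μ x t) :=
        Real.log_le_log (by positivity) (exp_neg_two_mul_measureReal_ball_le_distLaplace μ x ht)

theorem log_distLaplace_rpow_le (hx : ∀ ε > (0 : ℝ), 0 < μ (ball x ε)) {t e a : ℝ} (ht : 0 < t)
    (hm : μ.real (ball x t⁻¹) ≤ t ^ a)
    (htail : μ.real univ * Real.exp (-(2 * t ^ (e - 1))) ≤ t ^ a) :
    Real.log (distLaplace μ x (t ^ e)) ≤ Real.log 2 + a * Real.log t := by
  have hte : 0 < t ^ e := Real.rpow_pos_of_pos ht e
  have hF : distLaplace μ x (t ^ e) ≤ 2 * t ^ a := by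
    have := distLaplace_le_measureReal_ball_add μ x hte.le t⁻¹
    rw [Real.rpow_sub_one ht.ne', div_eq_mul_inv, ← mul_assoc] at htail
    linarith
  calc Real.log (distLaplace μ x (t ^ e)) ≤ Real.log (2 * t ^ a) :=
        Real.log_le_log (distLaplace_pos hx hte) hF
    _ = Real.log 2 + a * Real.log t := by
        rw [Real.log_mul two_ne_zero (Real.rpow_pos_of_pos ht a).ne', Real.log_rpow ht]

theorem eventually_lt_log_distLaplace_div_log (hx : ∀ ε > (0 : ℝ), 0 < μ (ball x ε))
    {a b : ℝ} (hab : b < a) :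
    ∀ᶠ t in atTop, a < Real.log (μ.real (ball x t⁻¹)) / Real.log t →
      b < Real.log (distLaplace μ x t) / Real.log t := by
  filter_upwards [eventually_gt_atTop 1,
    (Real.tendsto_log_atTop.const_mul_atTop (sub_pos.2 hab)).eventually_gt_atTop 2]
    with t ht₁ ht hv
  have hlog : 0 < Real.log t := Real.log_pos ht₁
  have := log_measureReal_ball_sub_two_le hx (zero_lt_one.trans ht₁)
  rw [lt_div_iff₀ hlog] at hv ⊢
  linarith

theorem exists_map_eq_atTop_log_distLaplace_div_log_le (hx : ∀ ε > (0 : ℝ), 0 < μ (ball x ε))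
    {a b : ℝ} (hab : a < b) (hb : b < 0) :
    ∃ φ : ℝ → ℝ, map φ atTop = atTop ∧ ∀ᶠ t in atTop,
      Real.log (μ.real (ball x t⁻¹)) / Real.log t < a →
        Real.log (distLaplace μ x (φ t)) / Real.log (φ t) ≤ b := by
  obtain ⟨e, he₁, he⟩ := exists_between ((one_lt_div_of_neg hb).2 hab)
  have hgap : 0 < b * e - a := by rw [lt_div_iff_of_neg hb] at he; linarith
  refine ⟨(· ^ e), Real.map_rpow_atTop (by linarith), ?_⟩
  filter_upwards [eventually_gt_atTop 1,
    eventually_mul_exp_neg_mul_rpow_le_rpow (μ.real univ) a two_pos (sub_pos.2 he₁),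
    (Real.tendsto_log_atTop.const_mul_atTop hgap).eventually_ge_atTop (Real.log 2)]
    with t ht₁ htail ht hv
  have ht₀ : 0 < t := zero_lt_one.trans ht₁
  have hlog : 0 < Real.log t := Real.log_pos ht₁
  have hm : μ.real (ball x t⁻¹) ≤ t ^ a := by
    rw [div_lt_iff₀ hlog, Real.log_lt_iff_lt_exp (measureReal_ball_pos hx (inv_pos.2 ht₀))]
      at hv
    rw [Real.rpow_def_of_pos ht₀, mul_comm]
    exact hv.le
  have := log_distLaplace_rpow_le hx ht₀ hm htail
  rw [Real.log_rpow ht₀, div_le_iff₀ (by positivity)]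
  nlinarith

theorem limsup_log_distLaplace_div_log_le_zero (hx : ∀ ε > (0 : ℝ), 0 < μ (ball x ε)) :
    limsup (fun t => ((Real.log (distLaplace μ x t) / Real.log t : ℝ) : EReal)) atTop ≤ 0 := by
  have hlim : Tendsto (fun t => ((Real.log (μ.real univ) / Real.log t : ℝ) : EReal)) atTop
      (𝓝 0) :=
    EReal.tendsto_coe.2 (tendsto_const_nhds.div_atTop Real.tendsto_log_atTop)
  refine (limsup_le_limsup ?_ (by isBoundedDefault) (by isBoundedDefault)).trans_eq
    hlim.limsup_eq
  filter_upwards [eventually_gt_atTop 1] with t ht₁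
  have ht₀ : 0 < t := zero_lt_one.trans ht₁
  exact EReal.coe_le_coe_iff.2 <| div_le_div_of_nonneg_right
    (Real.log_le_log (distLaplace_pos hx ht₀) (distLaplace_le_measureReal_univ μ x ht₀.le))
    (Real.log_pos ht₁).le

end Asymptotics

section ScalingExponents

variable {μ : Measure ℝ} {x : ℝ}

theorem dUp_eq_neg_liminf (hx : ∀ ε > (0 : ℝ), 0 < μ (ball x ε)) :
    dUp μ x = -liminf (fun t => ((Real.log (μ.real (ball x t⁻¹)) / Real.log t : ℝ) : EReal))
      atTop := by
  rw [dUp, if_neg (by simpa using fun ε hε => (hx ε hε).ne'), ← EReal.limsup_neg, ← inv_atTop₀,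
    ← Filter.map_inv, ← limsup_comp]
  congr 1; funext t
  simp [Real.log_inv, div_neg, measureReal_def]

theorem dLow_eq_neg_limsup (hx : ∀ ε > (0 : ℝ), 0 < μ (ball x ε)) :
    dLow μ x = -limsup (fun t => ((Real.log (μ.real (ball x t⁻¹)) / Real.log t : ℝ) : EReal))
      atTop := by
  rw [dLow, if_neg (by simpa using fun ε hε => (hx ε hε).ne'), ← EReal.liminf_neg, ← inv_atTop₀,
    ← Filter.map_inv, ← liminf_comp]
  congr 1; funext t
  simp [Real.log_inv, div_neg, measureReal_def]

end ScalingExponents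

/-- For a finite Borel measure `μ` and `x` with `μ(B(x;ε)) > 0` for all
`ε > 0`, `liminf ln(∫ e^{-2t|x-y|}dμ)/ln t = -d⁺_μ(x)` and
`limsup ln(∫ e^{-2t|x-y|}dμ)/ln t = -d⁻_μ(x)`. -/
theorem stmt_18 (μ : Measure ℝ) [IsFiniteMeasure μ] (x : ℝ)
    (hx : ∀ ε > (0 : ℝ), 0 < μ (Metric.ball x ε)) :
    Filter.liminf (fun t : ℝ =>
        ((Real.log (∫ y : ℝ, Real.exp (-2 * t * |x - y|) ∂μ) / Real.log t : ℝ) : EReal))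
        Filter.atTop = -(dUp μ x) ∧
      Filter.limsup (fun t : ℝ =>
        ((Real.log (∫ y : ℝ, Real.exp (-2 * t * |x - y|) ∂μ) / Real.log t : ℝ) : EReal))
        Filter.atTop = -(dLow μ x) := by
  have hzero := limsup_log_distLaplace_div_log_le_zero hx
  have hlower := fun a b (hab : b < a) => eventually_lt_log_distLaplace_div_log hx hab
  have hupper := fun a b (hab : a < b) hb =>
    exists_map_eq_atTop_log_distLaplace_div_log_le hx hab hb
  rw [dUp_eq_neg_liminf hx, dLow_eq_neg_limsup hx, neg_neg, neg_neg]
  exact ⟨le_antisymm (liminf_coe_le_liminf_coe_of_lt_imp_comp_le hzero hupper)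
      (liminf_coe_le_liminf_coe_of_lt_imp_lt hlower),
    le_antisymm (limsup_coe_le_limsup_coe_of_lt_imp_comp_le hzero hupper)
      (limsup_coe_le_limsup_coe_of_lt_imp_lt hlower)⟩
end
end
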